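/- arXiv:1109.6179 — 6 statements merged into one kernel-verified Lean document; each statement's English description precedes it below -/
import Mathlib

section
/- Let S ⊆ ℝ^d be a set and C ⊆ ℝ^d a convex set. Then the Helly number of the family of (S ∩ C)-convex sets is at most the Helly number of the family of S-convex sets, i.e. h(S ∩ C) ≤ h(S). -/
def HellyCond {d : ℕ} (S : Set (Fin d → ℝ)) (k : ℕ) : Prop :=
  ∀ (m : ℕ) (C : Fin m → Set (Fin d → ℝ)), (∀ i, Convex ℝ (C i)) →
    S ∩ ⋂ i, C i = ∅ →
    ∃ I : Finset (Fin m), I.card ≤ k ∧ S ∩ ⋂ i ∈ I, C i = ∅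

noncomputable def hellyNumber {d : ℕ} (S : Set (Fin d → ℝ)) : ℕ∞ :=
  sInf {k : ℕ∞ | ∃ n : ℕ, k = n ∧ HellyCond S n}

theorem helly_intersect_convex {d : ℕ} (S C : Set (Fin d → ℝ)) (hC : Convex ℝ C) :
    hellyNumber (S ∩ C) ≤ hellyNumber S := by
  apply sInf_le_sInf
  rintro k ⟨n, rfl, hn⟩
  refine ⟨n, rfl, ?_⟩
  intro m F hF hEmpty
  rcases Nat.eq_zero_or_pos m with hm | hm
  · subst hm
    refine ⟨∅, by simp, ?_⟩
    simpa using hEmpty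
  have hE' : S ∩ ⋂ i, (F i ∩ C) = ∅ := by
    apply Set.eq_empty_of_subset_empty
    rw [← hEmpty]
    rintro x ⟨hxS, hx⟩
    simp only [Set.mem_iInter, Set.mem_inter_iff] at hx ⊢
    have hxC : x ∈ C := (hx ⟨0, hm⟩).2
    exact ⟨⟨hxS, hxC⟩, fun i => (hx i).1⟩
  obtain ⟨I, hI, hIE⟩ := hn m (fun i => F i ∩ C) (fun i => (hF i).inter hC) hE'
  refine ⟨I, hI, ?_⟩
  apply Set.eq_empty_of_subset_empty
  rw [← hIE]
  rintro x ⟨⟨hxS, hxC⟩, hx⟩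
  simp only [Set.mem_iInter, Set.mem_inter_iff] at hx ⊢
  exact ⟨hxS, fun i hi => ⟨hx i hi, hxC⟩⟩
end

section
/- Let S ⊆ ℝ^d and let (S_t)_{t∈ℕ} be a nondecreasing sequence of subsets of ℝ^d (S_t ⊆ S_{t+1} for all t) with S = ⋃_{t∈ℕ} S_t. Then h(S) ≤ liminf_{t→∞} h(S_t). -/
lemma hellyCond_mono {d : ℕ} {S : Set (Fin d → ℝ)} {k l : ℕ}
    (h : HellyCond S k) (hkl : k ≤ l) : HellyCond S l := by
  intro m C hC hemp
  obtain ⟨I, hI, h2⟩ := h m C hC hemp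
  exact ⟨I, hI.trans hkl, h2⟩

lemma hellyCond_of_le {d : ℕ} {S : Set (Fin d → ℝ)} {n : ℕ}
    (h : hellyNumber S ≤ (n : ℕ∞)) : HellyCond S n := by
  have hex : ∃ k ∈ {k : ℕ∞ | ∃ m : ℕ, k = m ∧ HellyCond S m}, k ≤ (n : ℕ∞) := by
    by_contra hcon
    push_neg at hcon
    have h2 : ((n : ℕ∞) + 1) ≤ hellyNumber S :=
      le_sInf fun b hb => Order.add_one_le_of_lt (hcon b hb)
    have := h2.trans h
    have hn : ((n : ℕ∞) + 1) = ((n + 1 : ℕ) : ℕ∞) := by push_cast; ring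
    rw [hn] at this
    exact absurd (Nat.cast_le.mp this) (Nat.not_succ_le_self n)
  obtain ⟨k, ⟨m, rfl, hcond⟩, hkn⟩ := hex
  exact hellyCond_mono hcond (Nat.cast_le.mp hkn)

theorem helly_liminf {d : ℕ} (S : Set (Fin d → ℝ)) (St : ℕ → Set (Fin d → ℝ))
    (hmono : ∀ t, St t ⊆ St (t + 1)) (hunion : S = ⋃ t, St t) :
    hellyNumber S ≤ Filter.liminf (fun t => hellyNumber (St t)) Filter.atTop := by
  rcases eq_or_ne (Filter.liminf (fun t => hellyNumber (St t)) Filter.atTop) ⊤ with h | h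
  · rw [h]; exact le_top
  obtain ⟨n, hn⟩ := WithTop.ne_top_iff_exists.mp h
  rw [← hn]
  have hmono' : Monotone St := monotone_nat_of_le_succ hmono
  have hfreq : ∃ᶠ t in Filter.atTop, hellyNumber (St t) ≤ (n : ℕ∞) := by
    have hlt : Filter.liminf (fun t => hellyNumber (St t)) Filter.atTop < (n : ℕ∞) + 1 := by
      rw [← hn]
      have : ((n : ℕ∞)) < ((n + 1 : ℕ) : ℕ∞) := by exact_mod_cast Nat.lt_succ_self n
      show ((n : ℕ) : ℕ∞) < (n : ℕ∞) + 1
      exact_mod_cast this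
    have := Filter.frequently_lt_of_liminf_lt (h := hlt)
    exact this.mono fun t ht => Order.le_of_lt_add_one ht
  apply sInf_le
  refine ⟨n, rfl, ?_⟩
  intro m C hC hemp
  have hpick : ∀ t0 : ℕ, ∃ I : Finset (Fin m), I.card ≤ n ∧
      ∃ t, t0 ≤ t ∧ St t ∩ ⋂ i ∈ I, C i = ∅ := by
    intro t0
    obtain ⟨t, ht, hle⟩ := Filter.frequently_atTop.mp hfreq t0
    have hcond := hellyCond_of_le hle
    have hemp' : St t ∩ ⋂ i, C i = ∅ := by
      apply Set.eq_empty_of_subset_empty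
      rw [← hemp]
      exact Set.inter_subset_inter_left _ (by
        rw [hunion]; exact Set.subset_iUnion St t)
    obtain ⟨I, hI, hI2⟩ := hcond m C hC hemp'
    exact ⟨I, hI, t, ht, hI2⟩
  choose I hIcard t ht hempI using hpick
  obtain ⟨J, hJ⟩ := Finite.exists_infinite_fiber I
  have hJinf : (I ⁻¹' {J}).Infinite := Set.infinite_coe_iff.mp hJ
  obtain ⟨t0, ht0mem⟩ := hJinf.nonempty
  refine ⟨J, ?_, ?_⟩
  · rw [← (ht0mem : I t0 = J)]; exact hIcard t0
  · rw [Set.eq_empty_iff_forall_notMem]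
    rintro x ⟨hxS, hxC⟩
    rw [hunion] at hxS
    obtain ⟨t1, ht1⟩ := Set.mem_iUnion.mp hxS
    obtain ⟨t2, ht2mem, ht2gt⟩ := hJinf.exists_gt t1
    have hxSt : x ∈ St (t t2) := hmono' (ht2gt.le.trans (ht t2)) ht1
    have hxCJ : x ∈ ⋂ i ∈ I t2, C i := by
      rw [(ht2mem : I t2 = J)]; exact hxC
    have : x ∈ St (t t2) ∩ ⋂ i ∈ I t2, C i := ⟨hxSt, hxCJ⟩
    rw [hempI t2] at this
    exact this
end

section
/- The Helly number of ℤ^d is at least 2^d: the family of the 2^d sets F_z := {0,1}^d \ {z}, for z ∈ {0,1}^d, consists of ℤ^d-convex sets, has empty intersection, yet every proper subfamily has nonempty intersection. -/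
def SConvex {d : ℕ} (S A : Set (Fin d → ℝ)) : Prop :=
  ∃ C : Set (Fin d → ℝ), Convex ℝ C ∧ A = S ∩ C

namespace HellyAux

variable {d : ℕ}

def cube (d : ℕ) : Set (Fin d → ℝ) := {x | ∀ i, x i = 0 ∨ x i = 1}

def latt (d : ℕ) : Set (Fin d → ℝ) := {x | ∀ i, ∃ c : ℤ, x i = (c : ℝ)}

def Cz (z : Fin d → ℝ) : Set (Fin d → ℝ) :=
  {x | (∀ i, 0 ≤ x i ∧ x i ≤ 1) ∧
    ∑ i, (if z i = 1 then x i else 1 - x i) ≤ (d : ℝ) - 1/2}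

lemma convex_Cz (z : Fin d → ℝ) : Convex ℝ (Cz z) := by
  intro x hx y hy a b ha hb hab
  constructor
  · intro i
    have h1 := hx.1 i
    have h2 := hy.1 i
    simp only [Pi.add_apply, Pi.smul_apply, smul_eq_mul]
    constructor
    · nlinarith [mul_le_mul_of_nonneg_left h1.1 ha, mul_le_mul_of_nonneg_left h2.1 hb]
    · nlinarith [mul_le_mul_of_nonneg_left h1.2 ha, mul_le_mul_of_nonneg_left h2.2 hb]
  · have heq : ∀ i : Fin d,
        (if z i = 1 then (a • x + b • y) i else 1 - (a • x + b • y) i)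
          = a * (if z i = 1 then x i else 1 - x i)
            + b * (if z i = 1 then y i else 1 - y i) := by
      intro i
      by_cases h : z i = 1
      · simp only [h, if_true, Pi.add_apply, Pi.smul_apply, smul_eq_mul]
      · simp only [h, if_false, Pi.add_apply, Pi.smul_apply, smul_eq_mul]
        linear_combination (-1 : ℝ) * hab
    rw [Finset.sum_congr rfl fun i _ => heq i, Finset.sum_add_distrib,
      ← Finset.mul_sum, ← Finset.mul_sum]
    have hx2 := hx.2
    have hy2 := hy.2
    nlinarith [mul_le_mul_of_nonneg_left hx2 ha, mul_le_mul_of_nonneg_left hy2 hb]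

lemma cube_diff_eq (z : Fin d → ℝ) (hz : z ∈ cube d) :
    cube d \ {z} = latt d ∩ Cz z := by
  ext x
  constructor
  · rintro ⟨hxc, hxz⟩
    refine ⟨fun i => ?_, fun i => ?_, ?_⟩
    · rcases hxc i with h | h
      · exact ⟨0, by simp [h]⟩
      · exact ⟨1, by simp [h]⟩
    · rcases hxc i with h | h <;> rw [h] <;> norm_num
    · obtain ⟨i₀, hi₀⟩ : ∃ i, x i ≠ z i := by
        by_contra h
        push_neg at h
        exact hxz (funext h)
      have hterm : ∀ i : Fin d, (if z i = 1 then x i else 1 - x i) ≤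
          (if i = i₀ then 0 else 1) := by
        intro i
        by_cases hii : i = i₀
        · subst hii
          rcases hxc i with h | h <;> rcases hz i with h' | h' <;>
            simp [h, h'] at hi₀ ⊢
        · rcases hxc i with h | h <;> rcases hz i with h' | h' <;>
            simp [h, h', hii]
      have hsum : ∑ i : Fin d, (if i = i₀ then (0:ℝ) else 1) = (d : ℝ) - 1 := by
        have : ∀ i : Fin d, (if i = i₀ then (0:ℝ) else 1)
            = 1 - (if i = i₀ then 1 else 0) := by
          intro i; by_cases h : i = i₀ <;> simp [h]
        rw [Finset.sum_congr rfl fun i _ => this i, Finset.sum_sub_distrib]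
        simp [Finset.sum_ite_eq']
      calc ∑ i, (if z i = 1 then x i else 1 - x i)
          ≤ ∑ i : Fin d, (if i = i₀ then (0:ℝ) else 1) :=
            Finset.sum_le_sum fun i _ => hterm i
        _ = (d : ℝ) - 1 := hsum
        _ ≤ (d : ℝ) - 1/2 := by linarith
  · rintro ⟨hxl, hbox, hsum⟩
    have hxc : x ∈ cube d := by
      intro i
      obtain ⟨c, hc⟩ := hxl i
      have h1 := (hbox i).1
      have h2 := (hbox i).2
      rw [hc] at h1 h2 ⊢
      have : c = 0 ∨ c = 1 := by
        have : (0:ℤ) ≤ c := by exact_mod_cast h1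
        have : c ≤ 1 := by exact_mod_cast h2
        omega
      rcases this with h | h <;> simp [h]
    refine ⟨hxc, ?_⟩
    intro hxz
    have hxz' : x = z := hxz
    subst hxz'
    have : ∀ i : Fin d, (if x i = 1 then x i else 1 - x i) = 1 := by
      intro i
      rcases hz i with h | h <;> simp [h]
    rw [Finset.sum_congr rfl fun i _ => this i] at hsum
    simp at hsum
    linarith

def vtx (b : Fin d → Bool) : Fin d → ℝ := fun i => if b i then 1 else 0

lemma vtx_cube (b : Fin d → Bool) : vtx b ∈ cube d := by
  intro i
  by_cases h : b i <;> simp [vtx, h]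

lemma vtx_latt (b : Fin d → Bool) : vtx b ∈ latt d := by
  intro i
  by_cases h : b i
  · exact ⟨1, by simp [vtx, h]⟩
  · exact ⟨0, by simp [vtx, h]⟩

lemma vtx_inj : Function.Injective (vtx (d := d)) := by
  intro b b' h
  funext i
  have := congrFun h i
  by_cases hb : b i <;> by_cases hb' : b' i <;>
    simp [vtx, hb, hb'] at this ⊢

lemma main_bound (n : ℕ) (hH : HellyCond (latt d) n) : 2 ^ d ≤ n := by
  have hcard : Fintype.card (Fin d → Bool) = 2 ^ d := by
    simp [Fintype.card_fun]
  let e : (Fin d → Bool) ≃ Fin (2 ^ d) := Fintype.equivFinOfCardEq hcard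
  have hempty : latt d ∩ ⋂ i : Fin (2 ^ d), Cz (vtx (e.symm i)) = ∅ := by
    rw [Set.eq_empty_iff_forall_notMem]
    rintro x ⟨hxl, hxI⟩
    rw [Set.mem_iInter] at hxI
    have hx' : ∀ b : Fin d → Bool, x ∈ cube d \ {vtx b} := by
      intro b
      rw [cube_diff_eq _ (vtx_cube b)]
      have := hxI (e b)
      rw [Equiv.symm_apply_apply] at this
      exact ⟨hxl, this⟩
    have hxc : x ∈ cube d := (hx' (fun _ => false)).1
    have hx0 : x = vtx (fun i => decide (x i = 1)) := by
      funext i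
      rcases hxc i with h | h <;> simp [vtx, h]
    exact (hx' _).2 hx0
  obtain ⟨I, hIcard, hIempty⟩ :=
    hH (2 ^ d) (fun i => Cz (vtx (e.symm i))) (fun i => convex_Cz _) hempty
  by_contra hlt
  push_neg at hlt
  have hIne : ∃ j : Fin (2 ^ d), j ∉ I := by
    by_contra h
    push_neg at h
    have : I = Finset.univ := Finset.eq_univ_iff_forall.2 h
    rw [this, Finset.card_univ, Fintype.card_fin] at hIcard
    omega
  obtain ⟨j, hj⟩ := hIne
  have hw : vtx (e.symm j) ∈ latt d ∩ ⋂ i ∈ I, Cz (vtx (e.symm i)) := by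
    refine ⟨vtx_latt _, ?_⟩
    rw [Set.mem_iInter₂]
    intro i hi
    have hne : vtx (e.symm j) ≠ vtx (e.symm i) := by
      intro h
      exact hj ((e.symm.injective (vtx_inj h)) ▸ hi)
    have : vtx (e.symm j) ∈ latt d ∩ Cz (vtx (e.symm i)) := by
      rw [← cube_diff_eq _ (vtx_cube _)]
      exact ⟨vtx_cube _, hne⟩
    exact this.2
  rw [hIempty] at hw
  exact hw

end HellyAux

theorem helly_int_lattice_lower {d : ℕ} :
    (∀ z ∈ {x : Fin d → ℝ | ∀ i, x i = 0 ∨ x i = 1},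
        SConvex {x : Fin d → ℝ | ∀ i, ∃ c : ℤ, x i = (c : ℝ)}
          ({x : Fin d → ℝ | ∀ i, x i = 0 ∨ x i = 1} \ {z})) ∧
    (⋂ z ∈ {x : Fin d → ℝ | ∀ i, x i = 0 ∨ x i = 1},
        ({x : Fin d → ℝ | ∀ i, x i = 0 ∨ x i = 1} \ {z})) = ∅ ∧
    (∀ T : Set (Fin d → ℝ), T ⊂ {x : Fin d → ℝ | ∀ i, x i = 0 ∨ x i = 1} →
        (⋂ z ∈ T, ({x : Fin d → ℝ | ∀ i, x i = 0 ∨ x i = 1} \ {z})).Nonempty) ∧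
    (2 ^ d : ℕ∞) ≤ hellyNumber {x : Fin d → ℝ | ∀ i, ∃ c : ℤ, x i = (c : ℝ)} := by
  refine ⟨?_, ?_, ?_, ?_⟩
  · intro z hz
    exact ⟨HellyAux.Cz z, HellyAux.convex_Cz z, HellyAux.cube_diff_eq z hz⟩
  · rw [Set.eq_empty_iff_forall_notMem]
    intro x hx
    rw [Set.mem_iInter₂] at hx
    have hzero : (fun _ => (0:ℝ)) ∈ HellyAux.cube d := fun i => Or.inl rfl
    have hxc : x ∈ HellyAux.cube d := (hx _ hzero).1
    exact (hx x hxc).2 rfl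
  · intro T hT
    obtain ⟨w, hw, hwT⟩ := Set.exists_of_ssubset hT
    refine ⟨w, ?_⟩
    rw [Set.mem_iInter₂]
    intro z hz
    exact ⟨hw, fun h => hwT (h ▸ hz)⟩
  · refine le_sInf ?_
    rintro k ⟨n, rfl, hH⟩
    have := HellyAux.main_bound n hH
    exact_mod_cast this
end

section
/- Let S ⊆ ℝ^d and suppose k ∈ ℕ is such that every d-dimensional S-free polyhedron P is contained in an S-free polyhedron Q with at most k facets. Then every d-dimensional maximal S-free closed convex set is a polyhedron with at most k facets. More precisely, every d-dimensional S-free closed convex set L is contained in an S-free polyhedron with at most k facets. -/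
def IsFreeSet {d : ℕ} (S L : Set (Fin d → ℝ)) : Prop :=
  IsClosed L ∧ Convex ℝ L ∧ interior L ∩ S = ∅

def IsMaxFree {d : ℕ} (S L : Set (Fin d → ℝ)) : Prop :=
  IsFreeSet S L ∧ ∀ L', IsFreeSet S L' → L ⊆ L' → L' = L

def IsPolyhedron {d : ℕ} (P : Set (Fin d → ℝ)) : Prop :=
  ∃ (m : ℕ) (u : Fin m → ((Fin d → ℝ) →ₗ[ℝ] ℝ)) (b : Fin m → ℝ),
    P = {x | ∀ i, u i x ≤ b i}

def FullDim {d : ℕ} (A : Set (Fin d → ℝ)) : Prop := affineSpan ℝ A = ⊤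

noncomputable def adim {d : ℕ} (A : Set (Fin d → ℝ)) : ℕ :=
  Module.finrank ℝ (affineSpan ℝ A).direction

def IsFacet {d : ℕ} (P F : Set (Fin d → ℝ)) : Prop :=
  F.Nonempty ∧ IsExposed ℝ P F ∧ adim F + 1 = d

def FacetsLE {d : ℕ} (P : Set (Fin d → ℝ)) (k : ℕ) : Prop :=
  {F : Set (Fin d → ℝ) | IsFacet P F}.encard ≤ (k : ℕ∞)

open Module Set Filter Topology

variable {d : ℕ}

noncomputable def dotL (v : Fin d → ℝ) : (Fin d → ℝ) →ₗ[ℝ] ℝ :=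
  ∑ j, v j • LinearMap.proj j

lemma dotL_apply (v x : Fin d → ℝ) : dotL v x = ∑ j, v j * x j := by
  simp [dotL]

lemma dotL_cont (v : Fin d → ℝ) : Continuous (dotL v) :=
  (dotL v).continuous_of_finiteDimensional

lemma dotL_zero : dotL (0 : Fin d → ℝ) = 0 := by
  apply LinearMap.ext; intro x; simp [dotL_apply]

lemma dotL_self_pos {v : Fin d → ℝ} (hv : v ≠ 0) : 0 < dotL v v := by
  rw [dotL_apply]
  have h : ∃ j, v j ≠ 0 := by
    by_contra h; push_neg at h; exact hv (funext h)
  obtain ⟨j, hj⟩ := h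
  exact Finset.sum_pos' (fun i _ => mul_self_nonneg _) ⟨j, Finset.mem_univ j, mul_self_pos.2 hj⟩

lemma dotL_smul (c : ℝ) (v : Fin d → ℝ) : dotL (c • v) = c • dotL v := by
  apply LinearMap.ext; intro x
  simp [dotL_apply, Finset.mul_sum, mul_assoc]

lemma exists_dotL (ℓ : (Fin d → ℝ) →ₗ[ℝ] ℝ) : ∃ v, ℓ = dotL v := by
  refine ⟨fun j => ℓ (Pi.single j 1), ?_⟩
  apply LinearMap.ext; intro x
  rw [LinearMap.pi_apply_eq_sum_univ ℓ x, dotL_apply]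
  refine Finset.sum_congr rfl fun i _ => ?_
  rw [smul_eq_mul, mul_comm]
  congr 2
  ext j
  simp [Pi.single_apply, eq_comm]

/-- crude bound: `|⟪v,x⟫| ≤ ∑ |x j|` when all `|v j| ≤ 1`. -/
lemma dotL_le_sum_abs {v x : Fin d → ℝ} (hv : ∀ j, |v j| ≤ 1) :
    |dotL v x| ≤ ∑ j, |x j| := by
  rw [dotL_apply]
  calc |∑ j, v j * x j| ≤ ∑ j, |v j * x j| := Finset.abs_sum_le_sum_abs _ _
    _ ≤ ∑ j, |x j| := by
        refine Finset.sum_le_sum fun j _ => ?_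
        rw [abs_mul]
        calc |v j| * |x j| ≤ 1 * |x j| := by
              exact mul_le_mul_of_nonneg_right (hv j) (abs_nonneg _)
          _ = |x j| := one_mul _

/-- coordinates of a "unit" vector (w.r.t. dot) are at most 1 in absolute value -/
lemma abs_coord_le_one {v : Fin d → ℝ} (hv : dotL v v = 1) : ∀ j, |v j| ≤ 1 := by
  intro j
  rw [dotL_apply] at hv
  nlinarith [Finset.single_le_sum (f := fun j => v j * v j)
    (fun i _ => mul_self_nonneg (v i)) (Finset.mem_univ j), abs_nonneg (v j), sq_abs (v j),
    abs_mul_abs_self (v j)]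

def HSet {ι : Type*} (v : ι → (Fin d → ℝ)) (b : ι → ℝ) : Set (Fin d → ℝ) :=
  {x | ∀ i, dotL (v i) x ≤ b i}

lemma HSet_closed {ι : Type*} (v : ι → (Fin d → ℝ)) (b : ι → ℝ) : IsClosed (HSet v b) := by
  have : HSet v b = ⋂ i, {x | dotL (v i) x ≤ b i} := by
    ext x; simp [HSet]
  rw [this]
  exact isClosed_iInter fun i => isClosed_le (dotL_cont _) continuous_const

lemma HSet_convex {ι : Type*} (v : ι → (Fin d → ℝ)) (b : ι → ℝ) : Convex ℝ (HSet v b) := by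
  have : HSet v b = ⋂ i, {x | dotL (v i) x ≤ b i} := by
    ext x; simp [HSet]
  rw [this]
  exact convex_iInter fun i => convex_halfSpace_le (dotL (v i)).isLinear _

lemma HSet_isPolyhedron {ι : Type*} [Fintype ι] (v : ι → (Fin d → ℝ)) (b : ι → ℝ) :
    IsPolyhedron (HSet v b) := by
  classical
  obtain ⟨e⟩ := Fintype.truncEquivFin ι
  refine ⟨Fintype.card ι, fun i => dotL (v (e.symm i)), fun i => b (e.symm i), ?_⟩
  ext x
  constructor
  · intro hx i; exact hx (e.symm i)
  · intro hx i; simpa using hx (e i)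

lemma isPolyhedron_iff_HSet {P : Set (Fin d → ℝ)} :
    IsPolyhedron P ↔ ∃ (m : ℕ) (v : Fin m → (Fin d → ℝ)) (b : Fin m → ℝ), P = HSet v b := by
  constructor
  · rintro ⟨m, u, b, rfl⟩
    refine ⟨m, fun i => Classical.choose (exists_dotL (u i)), b, ?_⟩
    ext x
    simp only [HSet, mem_setOf_eq]
    constructor <;> intro h i <;>
      [rw [← Classical.choose_spec (exists_dotL (u i))]; rw [Classical.choose_spec (exists_dotL (u i))]] <;>
      exact h i
  · rintro ⟨m, v, b, rfl⟩
    exact HSet_isPolyhedron v b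

lemma mem_interior_HSet {ι : Type*} [Finite ι] {v : ι → (Fin d → ℝ)} {b : ι → ℝ}
    (hb : ∀ i, v i = 0 → 0 ≤ b i) {x : Fin d → ℝ}
    (hx : ∀ i, v i ≠ 0 → dotL (v i) x < b i) : x ∈ interior (HSet v b) := by
  have hsub : (⋂ i, {y | v i ≠ 0 → dotL (v i) y < b i}) ⊆ HSet v b := by
    intro y hy i
    simp only [mem_iInter, mem_setOf_eq] at hy
    by_cases h : v i = 0
    · rw [h, dotL_zero]; exact (hb i h).trans_eq' rfl
    · exact (hy i h).le
  have hopen : IsOpen (⋂ i, {y | v i ≠ 0 → dotL (v i) y < b i}) := by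
    refine isOpen_iInter_of_finite fun i => ?_
    by_cases h : v i = 0
    · simp only [h, ne_eq, not_true_eq_false, false_implies, setOf_true]; exact isOpen_univ
    · have : {y | v i ≠ 0 → dotL (v i) y < b i} = {y | dotL (v i) y < b i} := by
        ext y; simp [h]
      rw [this]
      exact isOpen_lt (dotL_cont _) continuous_const
  refine interior_maximal hsub hopen ?_
  simp only [mem_iInter, mem_setOf_eq]
  exact fun i h => hx i h

lemma strict_of_mem_interior {ι : Type*} {v : ι → (Fin d → ℝ)} {b : ι → ℝ}
    {x : Fin d → ℝ} (hx : x ∈ interior (HSet v b)) {i : ι} (hvi : v i ≠ 0) :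
    dotL (v i) x < b i := by
  rcases Metric.isOpen_iff.1 isOpen_interior x hx with ⟨ε, hε, hball⟩
  have hle : dotL (v i) x ≤ b i := (interior_subset hx) i
  rcases hle.lt_or_eq with h | h
  · exact h
  · exfalso
    set t : ℝ := ε / (2 * (‖v i‖ + 1)) with ht
    have hnorm : (0:ℝ) < ‖v i‖ + 1 := by positivity
    have htpos : 0 < t := by positivity
    have hmem : x + t • v i ∈ HSet v b := by
      apply interior_subset; apply hball
      simp only [Metric.mem_ball, dist_eq_norm]
      have : x + t • v i - x = t • v i := by abel
      rw [this, norm_smul, Real.norm_eq_abs, abs_of_pos htpos]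
      calc t * ‖v i‖ < t * (2 * (‖v i‖ + 1)) := by
            apply mul_lt_mul_of_pos_left _ htpos; nlinarith [norm_nonneg (v i)]
        _ = ε * (2 * (‖v i‖ + 1)) / (2 * (‖v i‖ + 1)) := by ring
        _ = ε := by field_simp
    have := hmem i
    rw [map_add, map_smul, h, smul_eq_mul] at this
    nlinarith [dotL_self_pos hvi]

lemma subset_closure_interior' {L : Set (Fin d → ℝ)} (hc : Convex ℝ L)
    (hne : (interior L).Nonempty) : L ⊆ closure (interior L) := by
  obtain ⟨y, hy⟩ := hne
  intro x hx
  have key : ∀ t : ℝ, t ∈ Ioc (0:ℝ) 1 → x + t • (y - x) ∈ interior L := fun t ht =>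
    hc.add_smul_sub_mem_interior hx hy ht
  have htend : Tendsto (fun n : ℕ => x + (1 / (n + 1) : ℝ) • (y - x)) atTop (𝓝 x) := by
    have : Tendsto (fun n : ℕ => (1 / (n + 1) : ℝ)) atTop (𝓝 0) :=
      tendsto_one_div_add_atTop_nhds_zero_nat
    have h2 : Tendsto (fun n : ℕ => x + (1 / (n + 1) : ℝ) • (y - x)) atTop (𝓝 (x + (0:ℝ) • (y - x))) := by
      exact tendsto_const_nhds.add (this.smul tendsto_const_nhds)
    simpa using h2
  refine mem_closure_of_tendsto htend (Eventually.of_forall fun n => ?_)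
  refine key _ ⟨by positivity, ?_⟩
  rw [div_le_one (by positivity)]
  linarith [Nat.cast_nonneg (α := ℝ) n]

/-- A relative interior point of a convex set moves both ways within the affine span. -/
lemma relint_point {F : Set (Fin d → ℝ)} (hc : Convex ℝ F) (hne : F.Nonempty) :
    ∃ x ∈ F, ∀ y ∈ affineSpan ℝ F, ∃ t : ℝ, 0 < t ∧
      x + t • (y - x) ∈ F ∧ x - t • (y - x) ∈ F := by
  obtain ⟨x, hx⟩ := hne.intrinsicInterior hc
  obtain ⟨z, hz, hzx⟩ := mem_intrinsicInterior.1 hx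
  refine ⟨x, intrinsicInterior_subset hx, fun y hy => ?_⟩
  have hxspan : x ∈ affineSpan ℝ F := hzx ▸ z.2
  -- the path t ↦ x + t • (y - x) inside the affine span
  have hpath : ∀ t : ℝ, x + t • (y - x) ∈ affineSpan ℝ F := by
    intro t
    have := AffineSubspace.smul_vsub_vadd_mem (affineSpan ℝ F) t hy hxspan hxspan
    simpa [vsub_eq_sub, vadd_eq_add, add_comm] using this
  set γ : ℝ → (affineSpan ℝ F : Set (Fin d → ℝ)) := fun t => ⟨x + t • (y - x), hpath t⟩ with hγ
  have hγcont : Continuous γ := by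
    apply Continuous.subtype_mk
    exact continuous_const.add (continuous_id.smul continuous_const)
  have hγ0 : γ 0 = z := by
    apply Subtype.ext
    simp [hγ, hzx]
  have hev : ∀ᶠ t in 𝓝 (0:ℝ), γ t ∈ interior ((↑) ⁻¹' F : Set (affineSpan ℝ F)) := by
    have := hγcont.continuousAt (x := (0:ℝ))
    exact this (isOpen_interior.mem_nhds (hγ0 ▸ hz))
  rcases Metric.eventually_nhds_iff.1 hev with ⟨ε, hε, hball⟩
  have hsmall : ∀ t : ℝ, |t| < ε → x + t • (y - x) ∈ F := by
    intro t ht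
    have h1 : γ t ∈ interior (Subtype.val ⁻¹' F) := hball (by simpa [dist_zero_right] using ht)
    have h2 : γ t ∈ (Subtype.val ⁻¹' F : Set (affineSpan ℝ F)) := interior_subset h1
    exact h2
  refine ⟨ε / 2, by positivity, hsmall _ (by rw [abs_of_pos (by positivity)]; linarith), ?_⟩
  have h2 := hsmall (-(ε/2)) (by rw [abs_neg, abs_of_pos (by positivity)]; linarith)
  have : x - (ε/2) • (y - x) = x + (-(ε/2)) • (y - x) := by module
  rw [this]; exact h2
/-- the hyperplane `{x | ⟪v,x⟫ = c}` as an affine subspace, for `v ≠ 0`. -/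
lemma hyperplane_spec {v : Fin d → ℝ} (hv : v ≠ 0) {x₀ : Fin d → ℝ} {c : ℝ}
    (hx₀ : dotL v x₀ = c) :
    ∃ H : AffineSubspace ℝ (Fin d → ℝ), (H : Set (Fin d → ℝ)) = {x | dotL v x = c} ∧
      Module.finrank ℝ H.direction + 1 = d ∧ H.direction = LinearMap.ker (dotL v) := by
  refine ⟨AffineSubspace.mk' x₀ (LinearMap.ker (dotL v)), ?_, ?_, by simp⟩
  · ext x
    rw [SetLike.mem_coe, AffineSubspace.mem_mk']
    simp only [vsub_eq_sub, LinearMap.mem_ker, map_sub, mem_setOf_eq, hx₀]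
    constructor
    · intro h; linarith [h]
    · intro h; linarith [h]
  · rw [AffineSubspace.direction_mk']
    have hrank := LinearMap.finrank_range_add_finrank_ker (dotL v)
    have hrange : LinearMap.range (dotL v) = ⊤ := by
      rw [LinearMap.range_eq_top]
      intro c
      refine ⟨(c / dotL v v) • v, ?_⟩
      rw [map_smul, smul_eq_mul, div_mul_cancel₀]
      exact (dotL_self_pos hv).ne'
    rw [hrange] at hrank
    simp only [finrank_top, Module.finrank_self] at hrank
    rw [Module.finrank_fin_fun] at hrank
    omega

lemma fullDim_of_ball {A : Set (Fin d → ℝ)} (hA : Convex ℝ A) {c : Fin d → ℝ} {r : ℝ}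
    (hr : 0 < r) (h : Metric.closedBall c r ⊆ A) : FullDim A := by
  refine (hA.interior_nonempty_iff_affineSpan_eq_top).1 ⟨c, ?_⟩
  exact interior_maximal (Metric.ball_subset_closedBall.trans h) Metric.isOpen_ball
    (Metric.mem_ball_self hr)

lemma adim_of_fullDim {A : Set (Fin d → ℝ)} (h : FullDim A) : adim A = d := by
  rw [adim, h, AffineSubspace.direction_top, finrank_top, Module.finrank_fin_fun]
-- continuing: facet counting
section FacetCount

variable {d : ℕ} {ι : Type*} [Fintype ι] {v : ι → (Fin d → ℝ)} {b : ι → ℝ}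

/-- every facet of an H-set lies in one of the nontrivial bounding hyperplanes -/
lemma facet_subset_hyperplane (hb : ∀ i, v i = 0 → 0 ≤ b i)
    (hfull : FullDim (HSet v b)) {F : Set (Fin d → ℝ)} (hF : IsFacet (HSet v b) F) :
    ∃ i, v i ≠ 0 ∧ F ⊆ {x | dotL (v i) x = b i} := by
  obtain ⟨hFne, hFexp, hFdim⟩ := hF
  have hFconv : Convex ℝ F := hFexp.convex (HSet_convex v b)
  obtain ⟨x, hxF, hrel⟩ := relint_point hFconv hFne
  have hxP : x ∈ HSet v b := hFexp.subset hxF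
  -- find a nontrivial tight constraint at x
  have hex : ∃ i, v i ≠ 0 ∧ dotL (v i) x = b i := by
    by_contra hcon
    push_neg at hcon
    have hxint : x ∈ interior (HSet v b) :=
      mem_interior_HSet hb (fun i hi => lt_of_le_of_ne (hxP i) (hcon i hi))
    -- then the exposing functional is zero and F = HSet v b, contradicting the dimension
    obtain ⟨l, hl⟩ := hFexp hFne
    have hlmax : ∀ z ∈ HSet v b, l z ≤ l x := by
      have := hl ▸ hxF
      exact (mem_setOf_eq ▸ this).2
    rcases Metric.isOpen_iff.1 isOpen_interior x hxint with ⟨ε, hε, hball⟩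
    have hlzero : ∀ w : Fin d → ℝ, l w ≤ 0 := by
      intro w
      rcases eq_or_ne w 0 with rfl | hw
      · simp
      · have hn : 0 < ‖w‖ := norm_pos_iff.2 hw
        set δ : ℝ := ε / (2 * ‖w‖) with hδ
        have hδpos : 0 < δ := by positivity
        have hmem : x + δ • w ∈ HSet v b := by
          apply interior_subset; apply hball
          simp only [Metric.mem_ball, dist_eq_norm]
          have h1 : x + δ • w - x = δ • w := by abel
          rw [h1, norm_smul, Real.norm_eq_abs, abs_of_pos hδpos, hδ]
          rw [div_mul_eq_mul_div, div_lt_iff₀ (by positivity)]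
          nlinarith
        have := hlmax _ hmem
        rw [map_add, map_smul, smul_eq_mul] at this
        nlinarith
    have hlzero' : l = 0 := by
      ext w
      have h1 := hlzero w
      have h2 := hlzero (-w)
      rw [map_neg] at h2
      have : l w = 0 := le_antisymm h1 (by linarith)
      simpa using this
    have hFP : F = HSet v b := by
      rw [hl, hlzero']
      ext z; simp
    have h1 : adim F = d := hFP ▸ adim_of_fullDim hfull
    omega
  obtain ⟨i, hvi, htight⟩ := hex
  refine ⟨i, hvi, fun y hyF => ?_⟩
  obtain ⟨t, htpos, hplus, hminus⟩ := hrel y (subset_affineSpan ℝ F hyF)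
  have h1 : dotL (v i) (x + t • (y - x)) ≤ b i := hFexp.subset hplus i
  have h2 : dotL (v i) (x - t • (y - x)) ≤ b i := hFexp.subset hminus i
  rw [map_add, map_smul, map_sub, smul_eq_mul, htight] at h1
  rw [map_sub, map_smul, map_sub, smul_eq_mul, htight] at h2
  have : dotL (v i) y - dotL (v i) x = 0 := by nlinarith
  rw [mem_setOf_eq]
  rw [← htight]; linarith

/-- the affine span of a facet contained in a hyperplane is the whole hyperplane -/
lemma facet_span_eq (hfull : FullDim (HSet v b)) {F : Set (Fin d → ℝ)}
    (hF : IsFacet (HSet v b) F) {i : ι} (hvi : v i ≠ 0)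
    (hsub : F ⊆ {x | dotL (v i) x = b i}) {H : AffineSubspace ℝ (Fin d → ℝ)}
    (hHset : (H : Set (Fin d → ℝ)) = {x | dotL (v i) x = b i})
    (hHdim : Module.finrank ℝ H.direction + 1 = d) :
    affineSpan ℝ F = H := by
  obtain ⟨hFne, hFexp, hFdim⟩ := hF
  have hle : affineSpan ℝ F ≤ H := affineSpan_le.2 (by rw [hHset]; exact hsub)
  have hdir : (affineSpan ℝ F).direction = H.direction := by
    apply Submodule.eq_of_le_of_finrank_le (AffineSubspace.direction_le hle)
    have : adim F = Module.finrank ℝ H.direction := by omega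
    rw [← this]; exact le_refl _
  apply AffineSubspace.ext_of_direction_eq hdir
  obtain ⟨x, hx⟩ := hFne
  exact ⟨x, subset_affineSpan ℝ F hx, hle (subset_affineSpan ℝ F hx)⟩

/-- two facets contained in the same nontrivial hyperplane coincide -/
lemma facet_eq_of_same_hyperplane (hfull : FullDim (HSet v b))
    {F F' : Set (Fin d → ℝ)} (hF : IsFacet (HSet v b) F) (hF' : IsFacet (HSet v b) F')
    {i : ι} (hvi : v i ≠ 0) (hsub : F ⊆ {x | dotL (v i) x = b i})
    (hsub' : F' ⊆ {x | dotL (v i) x = b i}) : F = F' := by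
  -- the common hyperplane
  obtain ⟨x₀, hx₀F⟩ := hF.1
  obtain ⟨H, hHset, hHdim, -⟩ := hyperplane_spec hvi (hsub hx₀F)
  have hspan : affineSpan ℝ F = H := facet_span_eq hfull hF hvi hsub hHset hHdim
  have hspan' : affineSpan ℝ F' = H := facet_span_eq hfull hF' hvi hsub' hHset hHdim
  -- G := P ∩ hyperplane contains both and is contained in both
  set G : Set (Fin d → ℝ) := HSet v b ∩ {x | dotL (v i) x = b i} with hG
  have key : ∀ F₁ : Set (Fin d → ℝ), IsFacet (HSet v b) F₁ →
      F₁ ⊆ {x | dotL (v i) x = b i} → affineSpan ℝ F₁ = H → G ⊆ F₁ := by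
    intro F₁ hF₁ hsub₁ hspan₁
    obtain ⟨hne₁, hexp₁, hdim₁⟩ := hF₁
    have hconv₁ : Convex ℝ F₁ := hexp₁.convex (HSet_convex v b)
    obtain ⟨x, hxF, hrel⟩ := relint_point hconv₁ hne₁
    obtain ⟨l, hl⟩ := hexp₁ hne₁
    intro y hyG
    have hyH : y ∈ H := by rw [← SetLike.mem_coe, hHset]; exact hyG.2
    have hyspan : y ∈ affineSpan ℝ F₁ := by rw [hspan₁]; exact hyH
    obtain ⟨t, htpos, hplus, hminus⟩ := hrel y hyspan
    have hxF' := hl ▸ hxF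
    have hxmax : ∀ z ∈ HSet v b, l z ≤ l x := (mem_setOf_eq ▸ hxF').2
    have hxP : x ∈ HSet v b := hexp₁.subset hxF
    have hplusF := hl ▸ hplus
    have hplusP : x + t • (y - x) ∈ HSet v b := hexp₁.subset hplus
    have h1 : l (x + t • (y - x)) ≤ l x := hxmax _ hplusP
    have h2 : l x ≤ l (x + t • (y - x)) := (mem_setOf_eq ▸ hplusF).2 x hxP
    have heq : l (x + t • (y - x)) = l x := le_antisymm h1 h2
    rw [map_add, map_smul, map_sub, smul_eq_mul] at heq
    have hly : l y = l x := by nlinarith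
    rw [hl]
    refine ⟨hyG.1, fun z hz => ?_⟩
    rw [hly]
    exact hxmax z hz
  have hGF : G ⊆ F := key F hF hsub hspan
  have hGF' : G ⊆ F' := key F' hF' hsub' hspan'
  have hFG : F ⊆ G := fun z hz => ⟨hF.2.1.subset hz, hsub hz⟩
  have hF'G : F' ⊆ G := fun z hz => ⟨hF'.2.1.subset hz, hsub' hz⟩
  exact subset_antisymm (hFG.trans hGF') (hF'G.trans hGF)

lemma facets_encard_le (hb : ∀ i, v i = 0 → 0 ≤ b i) (hfull : FullDim (HSet v b)) :
    {F : Set (Fin d → ℝ) | IsFacet (HSet v b) F}.encard ≤ (Fintype.card ι : ℕ∞) := by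
  classical
  rcases eq_empty_or_nonempty {F : Set (Fin d → ℝ) | IsFacet (HSet v b) F} with he | hne
  · rw [he, Set.encard_empty]; exact zero_le
  obtain ⟨F₀, hF₀⟩ := hne
  have hι : Nonempty ι := ⟨(facet_subset_hyperplane hb hfull hF₀).choose⟩
  set φ : Set (Fin d → ℝ) → ι := fun F =>
    if h : ∃ i, v i ≠ 0 ∧ F ⊆ {x | dotL (v i) x = b i} then h.choose
    else Classical.arbitrary ι with hφ
  have hinj : Set.InjOn φ {F : Set (Fin d → ℝ) | IsFacet (HSet v b) F} := by
    intro F hF F' hF' heq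
    have h1 : ∃ i, v i ≠ 0 ∧ F ⊆ {x | dotL (v i) x = b i} :=
      facet_subset_hyperplane hb hfull hF
    have h2 : ∃ i, v i ≠ 0 ∧ F' ⊆ {x | dotL (v i) x = b i} :=
      facet_subset_hyperplane hb hfull hF'
    rw [hφ] at heq
    simp only [dif_pos h1, dif_pos h2] at heq
    obtain ⟨hv1, hs1⟩ := h1.choose_spec
    obtain ⟨hv2, hs2⟩ := h2.choose_spec
    rw [heq] at hv1 hs1
    exact facet_eq_of_same_hyperplane hfull hF hF' hv2 hs1 hs2
  calc {F : Set (Fin d → ℝ) | IsFacet (HSet v b) F}.encard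
      = (φ '' {F : Set (Fin d → ℝ) | IsFacet (HSet v b) F}).encard := (hinj.encard_image).symm
    _ ≤ (Set.univ : Set ι).encard := Set.encard_le_encard (subset_univ _)
    _ = (Fintype.card ι : ℕ∞) := by
        rw [Set.encard_univ, ENat.card_eq_coe_fintype_card]

end FacetCount
section Irredundant

variable {d : ℕ} {ι : Type*} [Fintype ι] {v : ι → (Fin d → ℝ)} {b : ι → ℝ}

/-- Each globally irredundant constraint of a full-dimensional H-set defines a facet,
and distinct constraints give distinct facets. -/
lemma facets_of_irredundant (hfull : FullDim (HSet v b))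
    (hirr : ∀ i, ∃ y, (∀ j, j ≠ i → dotL (v j) y ≤ b j) ∧ b i < dotL (v i) y) :
    (∀ i, v i ≠ 0) ∧
    (∀ i, IsFacet (HSet v b) (HSet v b ∩ {x | dotL (v i) x = b i})) ∧
    Function.Injective (fun i => HSet v b ∩ {x | dotL (v i) x = b i}) := by
  classical
  set P := HSet v b with hP
  have hPconv : Convex ℝ P := HSet_convex v b
  obtain ⟨z, hz⟩ := (hPconv.interior_nonempty_iff_affineSpan_eq_top).2 hfull
  have hzP : z ∈ P := interior_subset hz
  -- nontriviality
  have hvne : ∀ i, v i ≠ 0 := by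
    intro i hvi
    obtain ⟨y, _, hy2⟩ := hirr i
    rw [hvi, dotL_zero] at hy2
    have := hzP i
    rw [hvi, dotL_zero] at this
    simp at hy2 this
    linarith
  have hzstrict : ∀ j, dotL (v j) z < b j := fun j => strict_of_mem_interior hz (hvne j)
  -- a point tight exactly at i
  have hex : ∀ i, ∃ x, dotL (v i) x = b i ∧ (∀ j, j ≠ i → dotL (v j) x < b j) := by
    intro i
    obtain ⟨y, hy1, hy2⟩ := hirr i
    set D : ℝ := dotL (v i) y - dotL (v i) z with hD
    have hDpos : 0 < D := by have := hzstrict i; simp [hD]; linarith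
    set t : ℝ := (b i - dotL (v i) z) / D with ht
    have htpos : 0 < t := div_pos (by linarith [hzstrict i]) hDpos
    have htlt : t < 1 := by
      rw [ht, div_lt_one hDpos]; simp [hD]; linarith
    refine ⟨z + t • (y - z), ?_, ?_⟩
    · rw [map_add, map_smul, map_sub, smul_eq_mul, ht]
      field_simp
      rw [hD]; ring
    · intro j hj
      rw [map_add, map_smul, map_sub, smul_eq_mul]
      have h1 : dotL (v j) z < b j := hzstrict j
      have h2 : dotL (v j) y ≤ b j := hy1 j hj
      nlinarith
  -- the facet property
  have hFacet : ∀ i, IsFacet P (P ∩ {x | dotL (v i) x = b i}) := by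
    intro i
    obtain ⟨x, hx1, hx2⟩ := hex i
    have hxP : x ∈ P := by
      intro j
      rcases eq_or_ne j i with rfl | hj
      · exact hx1.le
      · exact (hx2 j hj).le
    obtain ⟨H, hHset, hHdim, hHdir⟩ := hyperplane_spec (hvne i) hx1
    -- an open neighborhood where all other constraints are strict
    have hOopen : IsOpen {w : Fin d → ℝ | ∀ j, j ≠ i → dotL (v j) w < b j} := by
      have : {w : Fin d → ℝ | ∀ j, j ≠ i → dotL (v j) w < b j}
          = ⋂ j, {w | j ≠ i → dotL (v j) w < b j} := by ext w; simp
      rw [this]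
      refine isOpen_iInter_of_finite fun j => ?_
      rcases eq_or_ne j i with rfl | hj
      · simp
      · simp only [hj, ne_eq, not_false_eq_true, forall_true_left]
        exact isOpen_lt (dotL_cont _) continuous_const
    obtain ⟨δ, hδpos, hδ⟩ := Metric.isOpen_iff.1 hOopen x hx2
    -- small kernel perturbations stay in the facet
    have hkermem : ∀ w ∈ LinearMap.ker (dotL (v i)), ‖w‖ < δ →
        x + w ∈ P ∩ {y | dotL (v i) y = b i} := by
      intro w hw hwn
      have hball : x + w ∈ Metric.ball x δ := by
        simp [dist_eq_norm]; simpa using hwn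
      have hO := hδ hball
      constructor
      · intro j
        rcases eq_or_ne j i with rfl | hj
        · rw [map_add, LinearMap.mem_ker.1 hw, add_zero, hx1]
        · exact (hO j hj).le
      · rw [mem_setOf_eq, map_add, LinearMap.mem_ker.1 hw, add_zero, hx1]
    refine ⟨⟨x, hxP, hx1⟩, ?_, ?_⟩
    · -- exposed
      intro _
      refine ⟨(dotL (v i)).toContinuousLinearMap, ?_⟩
      ext y
      simp only [mem_inter_iff, mem_setOf_eq, LinearMap.coe_toContinuousLinearMap']
      constructor
      · rintro ⟨hyP, hyeq⟩
        exact ⟨hyP, fun z hzP' => by rw [hyeq]; exact hzP' i⟩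
      · rintro ⟨hyP, hymax⟩
        refine ⟨hyP, le_antisymm (hyP i) ?_⟩
        rw [← hx1]
        exact hymax x hxP
    · -- dimension
      have hupper : (affineSpan ℝ (P ∩ {y | dotL (v i) y = b i})).direction ≤ H.direction := by
        apply AffineSubspace.direction_le
        apply affineSpan_le.2
        rw [hHset]
        exact fun y hy => hy.2
      have hlower : LinearMap.ker (dotL (v i)) ≤
          (affineSpan ℝ (P ∩ {y | dotL (v i) y = b i})).direction := by
        intro w hw
        rcases eq_or_ne w 0 with rfl | hwne
        · exact Submodule.zero_mem _
        have hnw : 0 < ‖w‖ := norm_pos_iff.2 hwne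
        set s : ℝ := δ / (2 * ‖w‖) with hs
        have hspos : 0 < s := by positivity
        have hsw : ‖s • w‖ < δ := by
          rw [norm_smul, Real.norm_eq_abs, abs_of_pos hspos, hs]
          rw [div_mul_eq_mul_div, div_lt_iff₀ (by positivity)]
          nlinarith
        have hmem := hkermem (s • w) (Submodule.smul_mem _ s hw) hsw
        have h1 : (x + s • w) -ᵥ x ∈ (affineSpan ℝ (P ∩ {y | dotL (v i) y = b i})).direction :=
          AffineSubspace.vsub_mem_direction
            (subset_affineSpan ℝ _ hmem) (subset_affineSpan ℝ _ ⟨hxP, hx1⟩)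
        have h2 : (x + s • w) -ᵥ x = s • w := by simp [vsub_eq_sub]
        rw [h2] at h1
        have := Submodule.smul_mem _ s⁻¹ h1
        rwa [inv_smul_smul₀ hspos.ne'] at this
      have hkerdim : Module.finrank ℝ (LinearMap.ker (dotL (v i))) + 1 = d := by
        rw [← hHdir]; exact hHdim
      have h1 := Submodule.finrank_mono hupper
      have h2 := Submodule.finrank_mono hlower
      rw [hHdir] at h1
      show adim (P ∩ {y | dotL (v i) y = b i}) + 1 = d
      rw [adim]
      omega
  refine ⟨hvne, hFacet, ?_⟩
  intro i j heq
  by_contra hne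
  obtain ⟨x, hx1, hx2⟩ := hex i
  have hxP : x ∈ P := by
    intro j'
    rcases eq_or_ne j' i with rfl | hj'
    · exact hx1.le
    · exact (hx2 j' hj').le
  have heq' : P ∩ {x | dotL (v i) x = b i} = P ∩ {x | dotL (v j) x = b j} := heq
  have hxFi : x ∈ P ∩ {y | dotL (v i) y = b i} := ⟨hxP, hx1⟩
  rw [heq'] at hxFi
  exact absurd hxFi.2 (hx2 j (fun h => hne h.symm)).ne

end Irredundant
section Representation

variable {d k : ℕ}

lemma exists_normalized_rep {P : Set (Fin d → ℝ)} (hP : IsPolyhedron P) (hfull : FullDim P)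
    (hk : {F : Set (Fin d → ℝ) | IsFacet P F}.encard ≤ (k : ℕ∞)) :
    ∃ (w : Fin k → (Fin d → ℝ)) (c : Fin k → ℝ),
      (∀ i, dotL (w i) (w i) = 1 ∨ (w i = 0 ∧ c i = 0)) ∧ P = HSet w c := by
  classical
  obtain ⟨m, v, b, rfl⟩ := isPolyhedron_iff_HSet.1 hP
  set P := HSet v b with hPdef
  -- minimal subrepresentation
  set HS : Finset (Fin m) → Set (Fin d → ℝ) := fun T => {x | ∀ i ∈ T, dotL (v i) x ≤ b i}
    with hHS
  have huniv : HS Finset.univ = P := by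
    ext x; simp only [hHS, Finset.mem_univ, mem_setOf_eq, forall_true_left, hPdef, HSet]
  set 𝒯 : Finset (Finset (Fin m)) := Finset.univ.filter (fun T => HS T = P) with h𝒯
  have h𝒯ne : 𝒯.Nonempty := ⟨Finset.univ, by simp [h𝒯, huniv]⟩
  obtain ⟨T₀, hT₀mem, hT₀min⟩ := Finset.exists_min_image 𝒯 Finset.card h𝒯ne
  have hT₀ : HS T₀ = P := by
    have := Finset.mem_filter.1 hT₀mem
    simpa using this.2
  set ι' := {i : Fin m // i ∈ T₀} with hι'
  set v' : ι' → (Fin d → ℝ) := fun i => v i.val with hv'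
  set b' : ι' → ℝ := fun i => b i.val with hb'
  have hPM : P = HSet v' b' := by
    rw [← hT₀]
    ext x
    simp only [hHS, mem_setOf_eq, HSet, hv', hb']
    exact ⟨fun h i => h i.val i.2, fun h i hi => h ⟨i, hi⟩⟩
  have hfull' : FullDim (HSet v' b') := hPM ▸ hfull
  -- irredundancy
  have hirr : ∀ i : ι', ∃ y, (∀ j : ι', j ≠ i → dotL (v' j) y ≤ b' j) ∧ b' i < dotL (v' i) y := by
    intro i
    set T₁ := T₀.erase i.val with hT₁
    have hsubset : HS T₀ ⊆ HS T₁ := by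
      intro x hx j hj
      exact hx j (Finset.mem_of_mem_erase hj)
    have hne : HS T₁ ≠ P := by
      intro h
      have hmem : T₁ ∈ 𝒯 := Finset.mem_filter.2 ⟨Finset.mem_univ _, by simpa using h⟩
      have := hT₀min T₁ hmem
      have hlt : T₁.card < T₀.card := Finset.card_erase_lt_of_mem i.2
      omega
    have hstrict : ∃ y, y ∈ HS T₁ ∧ y ∉ P := by
      by_contra hcon
      push_neg at hcon
      apply hne
      apply subset_antisymm (fun y hy => hcon y hy)
      rw [← hT₀]; exact hsubset
    obtain ⟨y, hy1, hy2⟩ := hstrict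
    refine ⟨y, ?_, ?_⟩
    · intro j hj
      apply hy1
      rw [hT₁, Finset.mem_erase]
      exact ⟨fun h => hj (Subtype.ext h), j.2⟩
    · rw [← hT₀] at hy2
      simp only [hHS, mem_setOf_eq, not_forall] at hy2
      obtain ⟨j, hjT₀, hjgt⟩ := hy2
      rcases eq_or_ne j i.val with rfl | hji
      · push_neg at hjgt; exact hjgt
      · exfalso
        exact hjgt (hy1 j (Finset.mem_erase.2 ⟨hji, hjT₀⟩))
  obtain ⟨hvne, hFacet, hinj⟩ := facets_of_irredundant hfull' hirr
  -- cardinality bound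
  set f : ι' → Set (Fin d → ℝ) := fun i => HSet v' b' ∩ {x | dotL (v' i) x = b' i} with hf
  have hcard : Fintype.card ι' ≤ k := by
    have h1 : (f '' Set.univ).encard = (Fintype.card ι' : ℕ∞) := by
      rw [(Set.injOn_of_injective hinj).encard_image, Set.encard_univ,
        ENat.card_eq_coe_fintype_card]
    have h2 : f '' Set.univ ⊆ {F : Set (Fin d → ℝ) | IsFacet P F} := by
      rintro _ ⟨i, -, rfl⟩
      rw [hPM]
      exact hFacet i
    have h3 := (Set.encard_le_encard h2).trans hk
    rw [h1] at h3
    exact_mod_cast h3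
  -- normalized representation over Fin k
  set n := Fintype.card ι' with hn
  set e : Fin n ≃ ι' := (Fintype.equivFin ι').symm with he
  set w : Fin k → (Fin d → ℝ) := fun i =>
    if h : (i : ℕ) < n then
      (Real.sqrt (dotL (v' (e ⟨i, h⟩)) (v' (e ⟨i, h⟩))))⁻¹ • v' (e ⟨i, h⟩) else 0 with hw
  set c : Fin k → ℝ := fun i =>
    if h : (i : ℕ) < n then
      (Real.sqrt (dotL (v' (e ⟨i, h⟩)) (v' (e ⟨i, h⟩))))⁻¹ * b' (e ⟨i, h⟩) else 0 with hc
  have hsqrtpos : ∀ i' : ι', 0 < Real.sqrt (dotL (v' i') (v' i')) :=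
    fun i' => Real.sqrt_pos.2 (dotL_self_pos (hvne i'))
  refine ⟨w, c, ?_, ?_⟩
  · intro i
    rw [hw, hc]
    by_cases h : (i : ℕ) < n
    · left
      simp only [dif_pos h]
      set i' := e ⟨i, h⟩
      set s := Real.sqrt (dotL (v' i') (v' i')) with hs
      have hspos : 0 < s := hsqrtpos i'
      rw [dotL_smul]
      simp only [LinearMap.smul_apply, map_smul, smul_eq_mul]
      have hsq : s * s = dotL (v' i') (v' i') :=
        Real.mul_self_sqrt (dotL_self_pos (hvne i')).le
      field_simp
      nlinarith [hsq]
    · right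
      simp only [dif_neg h, and_self]
  · rw [hPM]
    ext x
    simp only [HSet, mem_setOf_eq]
    constructor
    · intro hx i
      rw [hw, hc]
      by_cases h : (i : ℕ) < n
      · simp only [dif_pos h]
        set i' := e ⟨i, h⟩
        set s := Real.sqrt (dotL (v' i') (v' i')) with hs
        have hspos : 0 < s := hsqrtpos i'
        rw [dotL_smul]
        simp only [LinearMap.smul_apply, smul_eq_mul]
        have := hx i'
        have hinv : (0:ℝ) < s⁻¹ := by positivity
        exact mul_le_mul_of_nonneg_left this hinv.le
      · simp only [dif_neg h, dotL_zero, LinearMap.zero_apply, le_refl]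
    · intro hx i'
      have hlt : ((e.symm i' : Fin n) : ℕ) < k := lt_of_lt_of_le (e.symm i').2 hcard
      set i : Fin k := ⟨(e.symm i' : Fin n), hlt⟩ with hi
      have h : (i : ℕ) < n := (e.symm i').2
      have := hx i
      rw [hw, hc] at this
      simp only [dif_pos h] at this
      have hee : e ⟨(i : ℕ), h⟩ = i' := by
        have : (⟨(i : ℕ), h⟩ : Fin n) = e.symm i' := by
          apply Fin.ext; simp [hi]
        rw [this, Equiv.apply_symm_apply]
      rw [hee] at this
      set s := Real.sqrt (dotL (v' i') (v' i')) with hs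
      have hspos : 0 < s := hsqrtpos i'
      rw [dotL_smul] at this
      simp only [LinearMap.smul_apply, smul_eq_mul] at this
      have hinv : (0:ℝ) < s⁻¹ := by positivity
      calc dotL (v' i') x = s * (s⁻¹ * dotL (v' i') x) := by field_simp
        _ ≤ s * (s⁻¹ * b' i') := by
            apply mul_le_mul_of_nonneg_left this hspos.le
        _ = b' i' := by field_simp

end Representation
section InnerApprox

variable {d : ℕ}

lemma dotL_single (j : Fin d) (a : ℝ) (x : Fin d → ℝ) :
    dotL (Pi.single j a) x = a * x j := by
  rw [dotL_apply]
  rw [Finset.sum_eq_single j]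
  · simp
  · intro i _ hij; simp [Pi.single_apply, hij]
  · simp

lemma exists_poly_between {U K : Set (Fin d → ℝ)} (hU : IsOpen U) (hKc : IsCompact K)
    (hKconv : Convex ℝ K) (hKU : K ⊆ U) :
    ∃ P : Set (Fin d → ℝ), IsPolyhedron P ∧ K ⊆ P ∧ P ⊆ U := by
  classical
  obtain ⟨R, hR0, hR⟩ : ∃ R : ℝ, 0 < R ∧ K ⊆ Metric.closedBall 0 R := by
    obtain ⟨R', hR'⟩ := hKc.isBounded.subset_closedBall 0
    exact ⟨max R' 1, by positivity, hR'.trans (Metric.closedBall_subset_closedBall (le_max_left _ _))⟩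
  set C : Set (Fin d → ℝ) := Metric.closedBall 0 R \ U with hC
  have hCc : IsCompact C := (isCompact_closedBall 0 R).diff hU
  -- separating functionals
  have hsep : ∀ z ∈ C, ∃ (g : Fin d → ℝ) (u : ℝ), (∀ a ∈ K, dotL g a < u) ∧ u < dotL g z := by
    intro z hz
    have hzK : z ∉ K := fun h => hz.2 (hKU h)
    obtain ⟨f, u, hfu, hfz⟩ := geometric_hahn_banach_closed_point hKconv hKc.isClosed hzK
    obtain ⟨g, hg⟩ := exists_dotL (f : (Fin d → ℝ) →ₗ[ℝ] ℝ)
    refine ⟨g, u, fun a ha => ?_, ?_⟩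
    · rw [← hg]; exact hfu a ha
    · rw [← hg]; exact hfz
  set O : C → Set (Fin d → ℝ) := fun z =>
    {x | (hsep z.1 z.2).choose_spec.choose < dotL (hsep z.1 z.2).choose x} with hO
  have hOopen : ∀ z : C, IsOpen (O z) := fun z =>
    isOpen_lt continuous_const (dotL_cont _)
  have hCcover : C ⊆ ⋃ z : C, O z := by
    intro z hz
    exact Set.mem_iUnion.2 ⟨⟨z, hz⟩, (hsep z hz).choose_spec.choose_spec.2⟩
  obtain ⟨t, ht⟩ := hCc.elim_finite_subcover O hOopen hCcover
  -- assemble constraints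
  set ι := (Fin d × Bool) ⊕ {z : C // z ∈ t} with hι
  set vv : ι → (Fin d → ℝ) := fun i => match i with
    | Sum.inl (j, bb) => Pi.single j (if bb then (1:ℝ) else -1)
    | Sum.inr z => (hsep z.1.1 z.1.2).choose
  set bb : ι → ℝ := fun i => match i with
    | Sum.inl _ => R
    | Sum.inr z => (hsep z.1.1 z.1.2).choose_spec.choose
  refine ⟨HSet vv bb, HSet_isPolyhedron vv bb, ?_, ?_⟩
  · intro x hx i
    match i with
    | Sum.inl (j, bbool) =>
      have hxR : ‖x‖ ≤ R := by
        have := hR hx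
        simpa [dist_eq_norm] using this
      have hj : |x j| ≤ R := by
        have := (norm_le_pi_norm x j).trans hxR
        simpa [Real.norm_eq_abs] using this
      simp only [vv, bb, dotL_single]
      rcases abs_le.1 hj with ⟨h1, h2⟩
      cases bbool <;> simp <;> linarith
    | Sum.inr z =>
      exact ((hsep z.1.1 z.1.2).choose_spec.choose_spec.1 x hx).le
  · intro x hx
    by_contra hxU
    have hxball : x ∈ Metric.closedBall 0 R := by
      rw [Metric.mem_closedBall, dist_zero_right]
      rw [pi_norm_le_iff_of_nonneg hR0.le]
      intro j
      rw [Real.norm_eq_abs, abs_le]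
      constructor
      · have := hx (Sum.inl (j, false))
        simp only [vv, bb, dotL_single] at this
        norm_num at this
        linarith
      · have := hx (Sum.inl (j, true))
        simp only [vv, bb, dotL_single] at this
        norm_num at this
        linarith
    have hxC : x ∈ C := ⟨hxball, hxU⟩
    obtain ⟨z, hzt, hzx⟩ := Set.mem_iUnion₂.1 (ht hxC)
    have := hx (Sum.inr ⟨z, hzt⟩)
    simp only [vv, bb] at this
    exact absurd this (not_le.2 hzx)

end InnerApprox
section Squash

noncomputable def gsq (t : ℝ) : ℝ := t / (1 + |t|)
noncomputable def gsqinv (s : ℝ) : ℝ := s / (1 - |s|)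

lemma gsq_mono : Monotone gsq := by
  intro a c h
  unfold gsq
  rcases abs_cases a with ⟨ha, _⟩ | ⟨ha, _⟩ <;> rcases abs_cases c with ⟨hc, _⟩ | ⟨hc, _⟩ <;>
    rw [div_le_div_iff₀ (by positivity) (by positivity)] <;> nlinarith

lemma gsq_lt_one (t : ℝ) : gsq t < 1 := by
  unfold gsq
  rw [div_lt_one (by positivity)]
  rcases abs_cases t with ⟨h, _⟩ | ⟨h, _⟩ <;> linarith

lemma neg_one_lt_gsq (t : ℝ) : -1 < gsq t := by
  unfold gsq
  rw [lt_div_iff₀ (by positivity)]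
  rcases abs_cases t with ⟨h, _⟩ | ⟨h, _⟩ <;> nlinarith

lemma gsqinv_gsq (t : ℝ) : gsqinv (gsq t) = t := by
  unfold gsq gsqinv
  have h1 : (0:ℝ) < 1 + |t| := by positivity
  have h2 : |t / (1 + |t|)| = |t| / (1 + |t|) := by
    rw [abs_div, abs_of_pos h1]
  rw [h2]
  have h3 : 1 - |t| / (1 + |t|) = 1 / (1 + |t|) := by field_simp; ring
  rw [h3]
  field_simp

lemma gsq_cont : Continuous gsq := by
  apply Continuous.div continuous_id (by continuity)
  intro t; positivity

lemma gsqinv_contAt {s : ℝ} (hs : |s| < 1) : ContinuousAt gsqinv s := by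
  apply ContinuousAt.div continuousAt_id (by fun_prop)
  intro h; rw [sub_eq_zero] at h; rw [← h] at hs; simp at hs

lemma lt_of_gsq_lt {a c : ℝ} (h : gsq a < gsq c) : a < c := by
  by_contra hle
  push_neg at hle
  exact absurd (gsq_mono hle) (not_le.2 h)

end Squash

section UltraLim

lemma ultra_lim {X : Type*} [TopologicalSpace X] {K : Set X} (hK : IsCompact K) (f : ℕ → X)
    (hf : ∀ n, f n ∈ K) (U : Ultrafilter ℕ) : ∃ x ∈ K, Filter.Tendsto f U (nhds x) := by
  have hle : ↑(U.map f) ≤ Filter.principal K := by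
    rw [Ultrafilter.coe_map, Filter.le_principal_iff, Filter.mem_map]
    exact Filter.univ_mem' hf
  obtain ⟨x, hxK, hx⟩ := hK.ultrafilter_le_nhds (U.map f) hle
  exact ⟨x, hxK, by rwa [Filter.Tendsto, ← Ultrafilter.coe_map]⟩

end UltraLim

section MoreDot

variable {d : ℕ}

lemma cont_dot_self : Continuous (fun v : Fin d → ℝ => dotL v v) := by
  have : (fun v : Fin d → ℝ => dotL v v) = fun v => ∑ j, v j * v j := by
    funext v; rw [dotL_apply]
  rw [this]
  exact continuous_finset_sum _ fun j _ => (continuous_apply j).mul (continuous_apply j)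

lemma cont_dot_left (x : Fin d → ℝ) : Continuous (fun v : Fin d → ℝ => dotL v x) := by
  have : (fun v : Fin d → ℝ => dotL v x) = fun v => ∑ j, v j * x j := by
    funext v; rw [dotL_apply]
  rw [this]
  exact continuous_finset_sum _ fun j _ => (continuous_apply j).mul continuous_const

lemma poly_closed {P : Set (Fin d → ℝ)} (hP : IsPolyhedron P) : IsClosed P := by
  obtain ⟨m, v, b, rfl⟩ := isPolyhedron_iff_HSet.1 hP
  exact HSet_closed v b

lemma poly_convex {P : Set (Fin d → ℝ)} (hP : IsPolyhedron P) : Convex ℝ P := by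
  obtain ⟨m, v, b, rfl⟩ := isPolyhedron_iff_HSet.1 hP
  exact HSet_convex v b

end MoreDot
section Main

variable {d k : ℕ}

lemma main_free (S : Set (Fin d → ℝ)) (k : ℕ)
    (hyp : ∀ P, IsPolyhedron P → FullDim P → IsFreeSet S P →
      ∃ Q, IsPolyhedron Q ∧ IsFreeSet S Q ∧ FacetsLE Q k ∧ P ⊆ Q)
    (L : Set (Fin d → ℝ)) (hLfree : IsFreeSet S L) (hLfull : FullDim L) :
    ∃ Q, IsPolyhedron Q ∧ IsFreeSet S Q ∧ FacetsLE Q k ∧ L ⊆ Q := by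
  classical
  obtain ⟨hLclosed, hLconv, hLS⟩ := hLfree
  have hint : (interior L).Nonempty :=
    (hLconv.interior_nonempty_iff_affineSpan_eq_top).2 hLfull
  -- a closed ball inside the interior
  obtain ⟨c₀, r, hr, hball⟩ : ∃ (c₀ : Fin d → ℝ) (r : ℝ), 0 < r ∧
      Metric.closedBall c₀ r ⊆ interior L := by
    obtain ⟨c, hc⟩ := hint
    obtain ⟨ε, hε, hεball⟩ := Metric.isOpen_iff.1 isOpen_interior c hc
    exact ⟨c, ε/2, by positivity,
      (Metric.closedBall_subset_ball (by linarith)).trans hεball⟩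
  -- a countable set of test points, dense in the interior
  obtain ⟨D, hDcount, hDdense⟩ := TopologicalSpace.exists_countable_dense (Fin d → ℝ)
  set D' : Set (Fin d → ℝ) := interior L ∩ D with hD'
  have hD'count : D'.Countable := hDcount.mono inter_subset_right
  have hD'ne : D'.Nonempty := hDdense.inter_open_nonempty _ isOpen_interior hint
  have hD'cl : interior L ⊆ closure D' := hDdense.open_subset_closure_inter isOpen_interior
  obtain ⟨y, hyrange⟩ := hD'count.exists_eq_range hD'ne
  have hymem : ∀ m, y m ∈ interior L := by
    intro m
    have : y m ∈ D' := hyrange ▸ mem_range_self m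
    exact this.1
  -- inner polyhedra
  have hPn : ∀ n : ℕ, ∃ P, IsPolyhedron P ∧
      (Metric.closedBall c₀ r ∪ y '' {m | m ≤ n}) ⊆ P ∧ P ⊆ interior L := by
    intro n
    -- the closed ball (for the sup norm) is the convex hull of the cube vertices
    obtain ⟨V, hVfin, hVball, hVhull⟩ : ∃ V : Set (Fin d → ℝ), V.Finite ∧
        V ⊆ Metric.closedBall c₀ r ∧ Metric.closedBall c₀ r ⊆ convexHull ℝ V := by
      set V : Set (Fin d → ℝ) := Set.univ.pi (fun j => {c₀ j - r, c₀ j + r}) with hV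
      have hballpi : Metric.closedBall c₀ r
          = Set.univ.pi (fun j => Icc (c₀ j - r) (c₀ j + r)) := by
        ext x
        rw [Metric.mem_closedBall, dist_pi_le_iff hr.le, Set.mem_univ_pi]
        constructor
        · intro h j
          have := abs_le.1 (by simpa [Real.dist_eq] using h j)
          exact ⟨by linarith [this.1], by linarith [this.2]⟩
        · intro h j
          rw [Real.dist_eq, abs_le]
          exact ⟨by linarith [(h j).1], by linarith [(h j).2]⟩
      have hconv : convexHull ℝ V = Metric.closedBall c₀ r := by
        rw [hV, convexHull_pi, hballpi]
        have : (fun i => convexHull ℝ ({c₀ i - r, c₀ i + r} : Set ℝ))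
            = fun j => Icc (c₀ j - r) (c₀ j + r) :=
          funext fun j => by rw [convexHull_pair, segment_eq_Icc (by linarith)]
        rw [this]
      refine ⟨V, Set.Finite.pi (fun j => (Set.finite_singleton _).insert _), ?_, ?_⟩
      · rw [← hconv]; exact subset_convexHull ℝ V
      · rw [← hconv]
    set K₀ : Set (Fin d → ℝ) := V ∪ y '' {m | m ≤ n} with hK₀
    have hK₀fin : K₀.Finite := hVfin.union ((Set.finite_le_nat n).image y)
    have hK₀U : K₀ ⊆ interior L := by
      rintro x (hx | ⟨m, -, rfl⟩)
      · exact hball (hVball hx)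
      · exact hymem m
    set K : Set (Fin d → ℝ) := convexHull ℝ K₀ with hK
    have hKc : IsCompact K := hK₀fin.isCompact_convexHull (𝕜 := ℝ)
    have hKU : K ⊆ interior L :=
      convexHull_min hK₀U (hLconv.interior)
    obtain ⟨P, hP1, hP2, hP3⟩ :=
      exists_poly_between isOpen_interior hKc (convex_convexHull ℝ K₀) hKU
    refine ⟨P, hP1, ?_, hP3⟩
    rintro x (hx | hx)
    · exact hP2 (hVhull.trans (convexHull_mono subset_union_left) hx)
    · exact hP2 (subset_convexHull ℝ K₀ (Or.inr hx))
  choose P hPpoly hPsub hPint using hPn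
  have hPball : ∀ n, Metric.closedBall c₀ r ⊆ P n := fun n =>
    (subset_union_left).trans (hPsub n)
  have hPy : ∀ m n, m ≤ n → y m ∈ P n := fun m n h =>
    hPsub n (Or.inr ⟨m, h, rfl⟩)
  have hPfree : ∀ n, IsFreeSet S (P n) := by
    intro n
    refine ⟨poly_closed (hPpoly n), poly_convex (hPpoly n), ?_⟩
    have h1 : interior (P n) ⊆ interior L := interior_subset.trans (hPint n)
    rw [eq_empty_iff_forall_notMem]
    rintro x ⟨hx1, hx2⟩
    rw [eq_empty_iff_forall_notMem] at hLS
    exact hLS x ⟨h1 hx1, hx2⟩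
  have hPfull : ∀ n, FullDim (P n) := fun n =>
    fullDim_of_ball (poly_convex (hPpoly n)) hr (hPball n)
  -- apply the hypothesis
  have hQex : ∀ n, ∃ Q, IsPolyhedron Q ∧ IsFreeSet S Q ∧ FacetsLE Q k ∧ P n ⊆ Q :=
    fun n => hyp (P n) (hPpoly n) (hPfull n) (hPfree n)
  choose Q hQpoly hQfree hQfacets hQsub using hQex
  have hQball : ∀ n, Metric.closedBall c₀ r ⊆ Q n := fun n => (hPball n).trans (hQsub n)
  have hQfull : ∀ n, FullDim (Q n) := fun n =>
    fullDim_of_ball (hQfree n).2.1 hr (hQball n)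
  -- normalized representations
  have hrep : ∀ n, ∃ (w : Fin k → (Fin d → ℝ)) (c : Fin k → ℝ),
      (∀ i, dotL (w i) (w i) = 1 ∨ (w i = 0 ∧ c i = 0)) ∧ Q n = HSet w c :=
    fun n => exists_normalized_rep (hQpoly n) (hQfull n) (hQfacets n)
  choose w cc hwinv hQrep using hrep
  have hwcoord : ∀ n i j, |w n i j| ≤ 1 := by
    intro n i j
    rcases hwinv n i with h | ⟨h, -⟩
    · exact abs_coord_le_one h j
    · rw [h]; simp
  -- lower bound for the constants
  set M₀ : ℝ := ∑ j, |c₀ j| with hM₀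
  have hM₀0 : 0 ≤ M₀ := Finset.sum_nonneg fun j _ => abs_nonneg _
  have hc₀mem : ∀ n, c₀ ∈ Q n := fun n => hQball n (Metric.mem_closedBall_self hr.le)
  have hblo : ∀ n i, -M₀ ≤ cc n i := by
    intro n i
    have h1 : dotL (w n i) c₀ ≤ cc n i := by
      have := hc₀mem n
      rw [hQrep n] at this
      exact this i
    have h2 : |dotL (w n i) c₀| ≤ M₀ := dotL_le_sum_abs (hwcoord n i)
    rcases abs_le.1 h2 with ⟨h3, -⟩
    linarith
  -- ultrafilter limits
  set U : Ultrafilter ℕ := Ultrafilter.of atTop with hUdef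
  have hU : ↑U ≤ (atTop : Filter ℕ) := Ultrafilter.of_le _
  have hwa : ∀ i : Fin k, ∃ a ∈ Metric.closedBall (0 : Fin d → ℝ) 1,
      Filter.Tendsto (fun n => w n i) U (nhds a) := by
    intro i
    apply ultra_lim (isCompact_closedBall _ _)
    intro n
    rw [Metric.mem_closedBall, dist_zero_right]
    rw [pi_norm_le_iff_of_nonneg zero_le_one]
    intro j
    rw [Real.norm_eq_abs]
    exact hwcoord n i j
  choose a ha hatend using hwa
  have hgb : ∀ i : Fin k, ∃ β ∈ Set.Icc (gsq (-M₀)) 1,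
      Filter.Tendsto (fun n => gsq (cc n i)) U (nhds β) := by
    intro i
    apply ultra_lim isCompact_Icc
    intro n
    exact ⟨gsq_mono (hblo n i), (gsq_lt_one _).le⟩
  choose β hβ hβtend using hgb
  have hβgt : ∀ i, -1 < β i := fun i => lt_of_lt_of_le (neg_one_lt_gsq _) (hβ i).1
  -- limit of the norms
  have hdd : ∀ i, dotL (a i) (a i) = 0 ∨ dotL (a i) (a i) = 1 := by
    intro i
    have htend : Filter.Tendsto (fun n => dotL (w n i) (w n i)) U (nhds (dotL (a i) (a i))) :=
      (cont_dot_self.tendsto _).comp (hatend i)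
    have hmem : ∀ n, dotL (w n i) (w n i) ∈ ({0, 1} : Set ℝ) := by
      intro n
      rcases hwinv n i with h | ⟨h, -⟩
      · right; exact h
      · left; rw [h, dotL_zero]; rfl
    have hcl : IsClosed ({0, 1} : Set ℝ) := by
      apply Set.Finite.isClosed; simp
    have := hcl.mem_of_tendsto htend (Filter.Eventually.of_forall hmem)
    simpa using this
  -- the limit polyhedron
  set cond : Fin k → Prop := fun i => β i < 1 ∧ dotL (a i) (a i) = 1 with hcond
  set wl : Fin k → (Fin d → ℝ) := fun i => if cond i then a i else 0 with hwl
  set cl : Fin k → ℝ := fun i => if cond i then gsqinv (β i) else 0 with hcl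
  set QQ : Set (Fin d → ℝ) := HSet wl cl with hQQ
  -- tendsto facts under cond
  have htendc : ∀ i, cond i → Filter.Tendsto (fun n => cc n i) U (nhds (gsqinv (β i))) := by
    intro i hci
    have habs : |β i| < 1 := abs_lt.2 ⟨hβgt i, hci.1⟩
    have h1 : Filter.Tendsto (fun n => gsqinv (gsq (cc n i))) U (nhds (gsqinv (β i))) :=
      (gsqinv_contAt habs).tendsto.comp (hβtend i)
    have h2 : (fun n => gsqinv (gsq (cc n i))) = fun n => cc n i := by
      funext n; rw [gsqinv_gsq]
    rwa [h2] at h1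
  have htenddot : ∀ (i : Fin k) (x : Fin d → ℝ),
      Filter.Tendsto (fun n => dotL (w n i) x) U (nhds (dotL (a i) x)) := fun i x =>
    ((cont_dot_left x).tendsto _).comp (hatend i)
  -- membership in QQ for points eventually in all Q n
  have hmemQQ : ∀ p : Fin d → ℝ, (∀ᶠ n in (atTop : Filter ℕ), p ∈ Q n) → p ∈ QQ := by
    intro p hp i
    simp only [hwl, hcl]
    by_cases hci : cond i
    · rw [if_pos hci, if_pos hci]
      apply le_of_tendsto_of_tendsto (htenddot i p) (htendc i hci)
      apply hU
      filter_upwards [hp] with n hn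
      rw [hQrep n] at hn
      exact hn i
    · rw [if_neg hci, if_neg hci, dotL_zero]
      simp
  -- L ⊆ QQ
  have hLQQ : L ⊆ QQ := by
    have h1 : ∀ m, y m ∈ QQ := by
      intro m
      apply hmemQQ
      filter_upwards [Filter.eventually_ge_atTop m] with n hn
      exact hQsub n (hPy m n hn)
    have h2 : D' ⊆ QQ := by
      rw [hyrange]
      rintro _ ⟨m, rfl⟩
      exact h1 m
    have h3 : interior L ⊆ QQ := by
      intro x hx
      have := hD'cl hx
      have h4 : closure D' ⊆ closure QQ := closure_mono h2
      rw [(HSet_closed wl cl).closure_eq] at h4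
      exact h4 this
    intro x hx
    have h5 := subset_closure_interior' hLconv hint hx
    have h6 : closure (interior L) ⊆ closure QQ := closure_mono h3
    rw [(HSet_closed wl cl).closure_eq] at h6
    exact h6 h5
  -- free
  have hQQfree : IsFreeSet S QQ := by
    refine ⟨HSet_closed wl cl, HSet_convex wl cl, ?_⟩
    rw [eq_empty_iff_forall_notMem]
    rintro s ⟨hsQ, hsS⟩
    -- strictness at the limit
    have hEi : ∀ i : Fin k, ∀ᶠ n in ↑U, (w n i = 0 ∨ dotL (w n i) s < cc n i) := by
      intro i
      by_cases hβi : β i < 1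
      · rcases hdd i with hd0 | hd1
        · -- the limit normal vanishes, so eventually the normals vanish
          have htend : Filter.Tendsto (fun n => dotL (w n i) (w n i)) U (nhds 0) := by
            rw [← hd0]
            exact (cont_dot_self.tendsto _).comp (hatend i)
          have hev : ∀ᶠ n in ↑U, dotL (w n i) (w n i) < 1/2 :=
            htend.eventually (eventually_lt_nhds (by norm_num : (0:ℝ) < 1/2))
          filter_upwards [hev] with n hn
          left
          rcases hwinv n i with h | ⟨h, -⟩
          · rw [h] at hn; norm_num at hn
          · exact h
        · -- genuine constraint: strict inequality passes to the limit
          have hci : cond i := ⟨hβi, hd1⟩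
          have hane : a i ≠ 0 := by
            intro h; rw [h, dotL_zero] at hd1; simp at hd1
          have hwlne : wl i ≠ 0 := by simp only [hwl]; rw [if_pos hci]; exact hane
          have hstrict : dotL (a i) s < gsqinv (β i) := by
            have := strict_of_mem_interior hsQ hwlne
            simp only [hwl, hcl] at this
            rw [if_pos hci, if_pos hci] at this
            exact this
          filter_upwards [(htenddot i s).eventually_lt (htendc i hci) hstrict] with n hn
          exact Or.inr hn
      · -- constraint escaping to infinity
        have hβ1 : β i = 1 := le_antisymm (hβ i).2 (not_lt.1 hβi)
        set M₁ : ℝ := ∑ j, |s j| with hM₁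
        have hgM : gsq M₁ < 1 := gsq_lt_one _
        have hev : ∀ᶠ n in ↑U, gsq M₁ < gsq (cc n i) := by
          apply (hβtend i).eventually
          rw [hβ1] at *
          exact eventually_gt_nhds hgM
        filter_upwards [hev] with n hn
        right
        have h1 : M₁ < cc n i := lt_of_gsq_lt hn
        have h2 : |dotL (w n i) s| ≤ M₁ := dotL_le_sum_abs (hwcoord n i)
        rcases abs_le.1 h2 with ⟨-, h3⟩
        linarith
    have hall : ∀ᶠ n in ↑U, ∀ i : Fin k, (w n i = 0 ∨ dotL (w n i) s < cc n i) :=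
      Filter.eventually_all.2 hEi
    have hintQ : ∀ᶠ n in ↑U, s ∈ interior (Q n) := by
      filter_upwards [hall] with n hn
      rw [hQrep n]
      apply mem_interior_HSet
      · intro i hi
        rcases hwinv n i with h | ⟨-, h⟩
        · rw [hi, dotL_zero] at h; simp at h
        · rw [h]
      · intro i hvi
        rcases hn i with h | h
        · exact absurd h hvi
        · exact h
    obtain ⟨n, hn⟩ := hintQ.exists
    have := (hQfree n).2.2
    rw [eq_empty_iff_forall_notMem] at this
    exact this s ⟨hn, hsS⟩
  -- facets
  have hQQfull : FullDim QQ := fullDim_of_ball (HSet_convex wl cl) hr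
    ((hball.trans interior_subset).trans hLQQ)
  have hQQfacets : FacetsLE QQ k := by
    have hb : ∀ i, wl i = 0 → 0 ≤ cl i := by
      intro i hi
      simp only [hcl]
      by_cases hci : cond i
      · exfalso
        simp only [hwl] at hi
        rw [if_pos hci] at hi
        have := hci.2
        rw [hi, dotL_zero] at this
        simp at this
      · rw [if_neg hci]
    have := facets_encard_le hb hQQfull
    rwa [Fintype.card_fin] at this
  exact ⟨QQ, HSet_isPolyhedron wl cl, hQQfree, hQQfacets, hLQQ⟩

end Main

theorem key_lemma {d : ℕ} (S : Set (Fin d → ℝ)) (k : ℕ)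
    (hyp : ∀ P, IsPolyhedron P → FullDim P → IsFreeSet S P →
      ∃ Q, IsPolyhedron Q ∧ IsFreeSet S Q ∧ FacetsLE Q k ∧ P ⊆ Q) :
    (∀ L, IsFreeSet S L → FullDim L →
      ∃ Q, IsPolyhedron Q ∧ IsFreeSet S Q ∧ FacetsLE Q k ∧ L ⊆ Q) ∧
    (∀ L, IsMaxFree S L → FullDim L → IsPolyhedron L ∧ FacetsLE L k) := by
  refine ⟨main_free S k hyp, ?_⟩
  intro L hLmax hLfull
  obtain ⟨hLfree, hmax⟩ := hLmax
  obtain ⟨Q, hQpoly, hQfree, hQfacets, hLQ⟩ := main_free S k hyp L hLfree hLfull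
  have : Q = L := hmax Q hQfree hLQ
  rw [← this]
  exact ⟨hQpoly, hQfacets⟩
end

section
/- For every S ⊆ ℝ^d, f(S) ≤ h(S): if h(S) = k < ∞, then every d-dimensional S-free closed convex set is contained in an S-free polyhedron with at most k facets; in particular every d-dimensional maximal S-free set is a polyhedron with at most h(S) facets. -/
/-! ### Auxiliary machinery for the proof -/

open Set Metric Filter

section Aux

variable {d m : ℕ}

/-- Extracting the Helly condition from `hellyNumber S = k`. -/
lemma hellyCond_of_hellyNumber_eq {S : Set (Fin d → ℝ)} {k : ℕ}
    (hk : hellyNumber S = (k : ℕ∞)) : HellyCond S k := by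
  classical
  set A : Set ℕ∞ := {k : ℕ∞ | ∃ n : ℕ, k = n ∧ HellyCond S n} with hA
  have hS : hellyNumber S = sInf A := rfl
  rcases Set.eq_empty_or_nonempty A with hAe | hAne
  · rw [hS, hAe, sInf_empty] at hk
    exact absurd hk.symm (by simp)
  · set A' : Set ℕ := {n : ℕ | HellyCond S n} with hA'
    have hA'ne : A'.Nonempty := by
      obtain ⟨a, n, rfl, hn⟩ := hAne
      exact ⟨n, hn⟩
    set n₀ := sInf A' with hn₀def
    have hn₀ : HellyCond S n₀ := Nat.sInf_mem hA'ne
    have heq : sInf A = (n₀ : ℕ∞) := by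
      refine le_antisymm (sInf_le ⟨n₀, rfl, hn₀⟩) (le_sInf ?_)
      rintro a ⟨n, rfl, hn⟩
      exact_mod_cast Nat.sInf_le hn
    rw [hS, heq] at hk
    have : n₀ = k := by exact_mod_cast hk
    rw [← this]
    exact hn₀

/-- The compact "polar-like" set of affine functionals bounded by `1 + f x₀` on `L`. -/
def polarSet {d : ℕ} (L : Set (Fin d → ℝ)) (x₀ : Fin d → ℝ) :
    Set ((Fin d → ℝ) →L[ℝ] ℝ) :=
  {f | ∀ y ∈ L, f y ≤ 1 + f x₀}

lemma zero_mem_polarSet {L : Set (Fin d → ℝ)} {x₀ : Fin d → ℝ} :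
    (0 : (Fin d → ℝ) →L[ℝ] ℝ) ∈ polarSet L x₀ := by
  intro y _; simp

lemma isClosed_polarSet {L : Set (Fin d → ℝ)} {x₀ : Fin d → ℝ} :
    IsClosed (polarSet L x₀) := by
  have : polarSet L x₀ = ⋂ y ∈ L, {f : (Fin d → ℝ) →L[ℝ] ℝ | f y ≤ 1 + f x₀} := by
    ext f; simp [polarSet]
  rw [this]
  refine isClosed_biInter fun y _ => ?_
  have h1 : Continuous fun f : (Fin d → ℝ) →L[ℝ] ℝ => f y :=
    (ContinuousLinearMap.apply ℝ ℝ y).continuous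
  have h2 : Continuous fun f : (Fin d → ℝ) →L[ℝ] ℝ => 1 + f x₀ :=
    continuous_const.add (ContinuousLinearMap.apply ℝ ℝ x₀).continuous
  exact isClosed_le h1 h2

lemma isCompact_polarSet {L : Set (Fin d → ℝ)} {x₀ : Fin d → ℝ}
    (hx₀ : x₀ ∈ interior L) : IsCompact (polarSet L x₀) := by
  obtain ⟨ε, hε, hball⟩ : ∃ ε > 0, closedBall x₀ ε ⊆ L := by
    obtain ⟨ε, hε, hb⟩ := Metric.isOpen_iff.1 isOpen_interior x₀ hx₀
    exact ⟨ε / 2, by linarith, fun y hy =>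
      interior_subset (hb (lt_of_le_of_lt (mem_closedBall.1 hy) (by linarith)))⟩
  refine isCompact_of_isClosed_isBounded isClosed_polarSet ?_
  rw [isBounded_iff_forall_norm_le]
  refine ⟨ε⁻¹, fun f hf => ?_⟩
  have key : ∀ z : Fin d → ℝ, ‖z‖ ≤ ε → f z ≤ 1 := by
    intro z hz
    have h1 : x₀ + z ∈ L := hball (by
      simp [mem_closedBall, dist_eq_norm]
      simpa using hz)
    have := hf _ h1
    simp [map_add] at this
    linarith
  refine ContinuousLinearMap.opNorm_le_bound f (by positivity) fun x => ?_
  rcases eq_or_ne x 0 with rfl | hx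
  · simp
  · have hxn : (0:ℝ) < ‖x‖ := norm_pos_iff.2 hx
    have h1 : f ((ε / ‖x‖) • x) ≤ 1 := key _ (by
      rw [norm_smul]
      simp [abs_of_pos, hε, hxn, abs_div, abs_of_nonneg hε.le, abs_of_nonneg hxn.le]
      rw [div_mul_eq_mul_div, mul_div_assoc, div_self hxn.ne', mul_one])
    have h2 : f (-((ε / ‖x‖) • x)) ≤ 1 := key _ (by
      rw [norm_neg, norm_smul]
      simp [abs_div, abs_of_nonneg hε.le, abs_of_nonneg hxn.le]
      rw [div_mul_eq_mul_div, mul_div_assoc, div_self hxn.ne', mul_one])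
    rw [map_neg] at h2
    have habs : |f ((ε / ‖x‖) • x)| ≤ 1 := abs_le.2 ⟨by linarith, h1⟩
    rw [map_smul, smul_eq_mul, abs_mul, abs_div, abs_of_nonneg hε.le, abs_of_nonneg hxn.le] at habs
    rw [Real.norm_eq_abs]
    calc |f x| = (‖x‖ / ε) * (ε / ‖x‖ * |f x|) := by
          rw [← mul_assoc]
          rw [show ‖x‖ / ε * (ε / ‖x‖) = 1 by field_simp]
          rw [one_mul]
      _ ≤ (‖x‖ / ε) * 1 := mul_le_mul_of_nonneg_left habs (by positivity)
      _ = ε⁻¹ * ‖x‖ := by rw [mul_one, div_eq_inv_mul, mul_comm]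

/-- Separation: any point outside the interior of `L` is weakly separated by a
member of the polar set. -/
lemma polarSet_sep {L : Set (Fin d → ℝ)} {x₀ x : Fin d → ℝ}
    (hLv : Convex ℝ L) (hx₀ : x₀ ∈ interior L)
    (hx : x ∉ interior L) : ∃ f ∈ polarSet L x₀, 1 + f x₀ ≤ f x := by
  obtain ⟨f, hf⟩ := geometric_hahn_banach_open_point (hLv.interior) isOpen_interior hx
  have hyL : ∀ y ∈ L, f y ≤ f x := by
    intro y hy
    have hseg : ∀ t : ℝ, t ∈ Set.Ioo (0:ℝ) 1 →
        f (t • x₀ + (1 - t) • y) < f x := by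
      intro t ht
      exact hf _ (hLv.combo_interior_closure_mem_interior hx₀ (subset_closure hy)
        ht.1 (by linarith [ht.2]) (by ring))
    have hev : ∀ᶠ t : ℝ in nhdsWithin 0 (Set.Ioi 0),
        f (t • x₀ + (1 - t) • y) < f x := by
      filter_upwards [Ioo_mem_nhdsGT_of_mem (Set.mem_Ico.2 ⟨le_refl (0:ℝ), one_pos⟩)]
        with t ht using hseg t ht
    have hcont : Filter.Tendsto (fun t : ℝ => f (t • x₀ + (1 - t) • y))
        (nhdsWithin 0 (Set.Ioi 0)) (nhds (f y)) := by
      have : Continuous fun t : ℝ => f (t • x₀ + (1 - t) • y) := by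
        apply f.continuous.comp
        exact ((continuous_id.smul continuous_const).add
          ((continuous_const.sub continuous_id).smul continuous_const))
      have h2 := this.continuousAt (x := (0:ℝ))
      unfold ContinuousAt at h2
      rw [show (fun t : ℝ => f (t • x₀ + (1 - t) • y)) 0 = f y by simp] at h2
      exact h2.mono_left nhdsWithin_le_nhds
    exact le_of_tendsto hcont (hev.mono fun t ht => ht.le)
  have hx₀x : f x₀ < f x := hf _ hx₀
  set c : ℝ := f x - f x₀ with hc
  have hcpos : 0 < c := by simp [hc]; linarith
  refine ⟨c⁻¹ • f, ?_, ?_⟩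
  · intro y hy
    simp only [ContinuousLinearMap.coe_smul', Pi.smul_apply, smul_eq_mul]
    rw [← sub_nonneg]
    have h1 : 1 + c⁻¹ * f x₀ - c⁻¹ * f y = c⁻¹ * (c + f x₀ - f y) := by
      field_simp
    rw [h1]
    have h2 : f y ≤ f x := hyL y hy
    have h3 : c + f x₀ - f y = f x - f y := by rw [hc]; ring
    rw [h3]
    exact mul_nonneg (inv_nonneg.2 hcpos.le) (by linarith)
  · simp only [ContinuousLinearMap.coe_smul', Pi.smul_apply, smul_eq_mul]
    rw [← sub_nonneg]
    have h1 : c⁻¹ * f x - (1 + c⁻¹ * f x₀) = c⁻¹ * (f x - f x₀ - c) := by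
      field_simp
      rw [hc]; ring
    rw [h1, show f x - f x₀ - c = 0 by rw [hc]; ring, mul_zero]

/-- From the Helly condition, for every `δ > 0` there are `k` functionals that are
`δ`-close to separating every point of `S`. -/
lemma helly_net {S L : Set (Fin d → ℝ)} {k : ℕ} {x₀ : Fin d → ℝ}
    (hH : HellyCond S k) (hLv : Convex ℝ L) (hfree : interior L ∩ S = ∅)
    (hx₀ : x₀ ∈ interior L) {δ : ℝ} (hδ : 0 < δ) :
    ∃ w : Fin k → ((Fin d → ℝ) →L[ℝ] ℝ), (∀ l, w l ∈ polarSet L x₀) ∧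
      ∀ s ∈ S, ∃ l, ∃ g ∈ polarSet L x₀, (1 + g x₀ ≤ g s) ∧ dist (w l) g ≤ δ := by
  classical
  obtain ⟨t, htA, hcover⟩ := (isCompact_polarSet hx₀).elim_nhds_subcover
    (fun g => Metric.ball g δ) (fun g _ => Metric.ball_mem_nhds g hδ)
  set A := polarSet L x₀ with hA
  set N := t.card with hN
  set ctr : Fin N → ((Fin d → ℝ) →L[ℝ] ℝ) := fun i => (t.equivFin.symm i : _) with hctr
  set C : Fin N → Set (Fin d → ℝ) :=
    fun i => {x | ∀ g ∈ A ∩ Metric.ball (ctr i) δ, g x < 1 + g x₀} with hC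
  have hCconv : ∀ i, Convex ℝ (C i) := by
    intro i u hu v hv a b ha hb hab
    intro g hg
    have h1 := hu g hg
    have h2 := hv g hg
    have : g (a • u + b • v) = a * g u + b * g v := by
      simp [map_add, map_smul]
    rw [this]
    calc a * g u + b * g v < a * (1 + g x₀) + b * (1 + g x₀) := by
          rcases eq_or_lt_of_le ha with rfl0 | ha'
          · rcases eq_or_lt_of_le hb with rfl0' | hb'
            · exfalso; rw [← rfl0, ← rfl0'] at hab; simp at hab
            · rw [← rfl0]; simp
              exact (mul_lt_mul_iff_right₀ hb').2 h2
          · rcases eq_or_lt_of_le hb with rfl0' | hb'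
            · rw [← rfl0']; simp
              exact (mul_lt_mul_iff_right₀ ha').2 h1
            · exact add_lt_add ((mul_lt_mul_iff_right₀ ha').2 h1) ((mul_lt_mul_iff_right₀ hb').2 h2)
      _ = 1 + g x₀ := by rw [← add_mul, hab, one_mul]
  have hempty : S ∩ ⋂ i, C i = ∅ := by
    rw [Set.eq_empty_iff_forall_notMem]
    rintro s ⟨hsS, hsC⟩
    simp only [Set.mem_iInter] at hsC
    have hsint : s ∉ interior L := by
      intro hmem
      rw [Set.eq_empty_iff_forall_notMem] at hfree
      exact hfree s ⟨hmem, hsS⟩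
    obtain ⟨g, hgA, hgs⟩ := polarSet_sep hLv hx₀ hsint
    have := hcover hgA
    simp only [Set.mem_iUnion] at this
    obtain ⟨gc, hgc, hgball⟩ := this
    set i := t.equivFin ⟨gc, hgc⟩ with hi
    have hctr_i : ctr i = gc := by
      rw [hctr, hi]
      simp
    have := hsC i g ⟨hgA, by rw [hctr_i]; exact hgball⟩
    linarith
  obtain ⟨I, hIcard, hIempty⟩ := hH N C hCconv hempty
  set w : Fin k → ((Fin d → ℝ) →L[ℝ] ℝ) := fun l =>
    if h : (l : ℕ) < I.card then ctr (I.equivFin.symm ⟨l, h⟩) else 0 with hw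
  refine ⟨w, ?_, ?_⟩
  · intro l
    rw [hw]
    by_cases h : (l : ℕ) < I.card
    · simp only [h, dif_pos]
      rw [hctr]
      exact htA _ (t.equivFin.symm _).2
    · simp only [h, dif_neg, not_false_iff]
      exact zero_mem_polarSet
  · intro s hsS
    have hsnot : s ∉ ⋂ i ∈ I, C i := by
      intro hmem
      rw [Set.eq_empty_iff_forall_notMem] at hIempty
      exact hIempty s ⟨hsS, hmem⟩
    simp only [Set.mem_iInter, not_forall] at hsnot
    obtain ⟨i, hiI, hsi⟩ := hsnot
    simp only [hC, Set.mem_setOf_eq, not_forall] at hsi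
    obtain ⟨g, hg, hgs⟩ := hsi
    push_neg at hgs
    set j := I.equivFin ⟨i, hiI⟩ with hj
    have hjk : (j : ℕ) < I.card := j.2
    set l : Fin k := ⟨j, lt_of_lt_of_le hjk hIcard⟩ with hl
    refine ⟨l, g, hg.1, hgs, ?_⟩
    have hwl : w l = ctr i := by
      rw [hw]
      have h : ((l : Fin k) : ℕ) < I.card := by rw [hl]; exact hjk
      simp only [h, dif_pos]
      have he : (⟨(l : ℕ), h⟩ : Fin I.card) = j := by
        apply Fin.ext; rfl
      rw [he, hj, Equiv.symm_apply_apply]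
    rw [hwl]
    have : dist g (ctr i) < δ := (Metric.mem_ball.1 hg.2)
    rw [dist_comm] at this
    exact this.le

/-- The limit argument: `k` functionals from the polar set separating all of `S`. -/
lemma exists_cover {S L : Set (Fin d → ℝ)} {k : ℕ} {x₀ : Fin d → ℝ}
    (hH : HellyCond S k) (hLv : Convex ℝ L) (hfree : interior L ∩ S = ∅)
    (hx₀ : x₀ ∈ interior L) :
    ∃ w : Fin k → ((Fin d → ℝ) →L[ℝ] ℝ), (∀ l, w l ∈ polarSet L x₀) ∧
      ∀ s ∈ S, ∃ l, 1 + (w l) x₀ ≤ (w l) s := by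
  classical
  set A := polarSet L x₀ with hA
  set T : (Fin d → ℝ) → Set ((Fin d → ℝ) →L[ℝ] ℝ) :=
    fun s => {g | g ∈ A ∧ 1 + g x₀ ≤ g s} with hT
  have hTclosed : ∀ s, IsClosed (T s) := by
    intro s
    apply IsClosed.inter isClosed_polarSet
    have h1 : Continuous fun g : (Fin d → ℝ) →L[ℝ] ℝ => 1 + g x₀ :=
      continuous_const.add (ContinuousLinearMap.apply ℝ ℝ x₀).continuous
    exact isClosed_le h1 (ContinuousLinearMap.apply ℝ ℝ s).continuous
  have hTne : ∀ s ∈ S, (T s).Nonempty := by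
    intro s hs
    have : s ∉ interior L := by
      intro hmem
      rw [Set.eq_empty_iff_forall_notMem] at hfree
      exact hfree s ⟨hmem, hs⟩
    obtain ⟨g, hg1, hg2⟩ := polarSet_sep hLv hx₀ this
    exact ⟨g, hg1, hg2⟩
  have hWex : ∀ n : ℕ, ∃ w : Fin k → ((Fin d → ℝ) →L[ℝ] ℝ),
      (∀ l, w l ∈ A) ∧
      ∀ s ∈ S, ∃ l, ∃ g ∈ A, (1 + g x₀ ≤ g s) ∧ dist (w l) g ≤ ((n : ℝ) + 1)⁻¹ :=
    fun n => helly_net hH hLv hfree hx₀ (by positivity)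
  choose W hWA hWnet using hWex
  have hK : IsCompact (Set.pi Set.univ fun _ : Fin k => A) :=
    isCompact_univ_pi fun _ => isCompact_polarSet hx₀
  set U : Ultrafilter ℕ := Ultrafilter.of Filter.atTop with hU
  have hUle : (U : Filter ℕ) ≤ Filter.atTop := Ultrafilter.of_le _
  have hmem : Set.pi Set.univ (fun _ : Fin k => A) ∈ Ultrafilter.map W U := by
    rw [Ultrafilter.mem_map]
    have : W ⁻¹' (Set.pi Set.univ fun _ : Fin k => A) = Set.univ := by
      rw [Set.eq_univ_iff_forall]
      intro n
      simp only [Set.mem_preimage, Set.mem_pi, Set.mem_univ, forall_true_left]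
      intro l
      exact hWA n l
    rw [this]
    exact Filter.univ_mem
  obtain ⟨w, hwK, hwconv⟩ := hK.ultrafilter_le_nhds (Ultrafilter.map W U)
    (Filter.le_principal_iff.2 hmem)
  have hconv : Filter.Tendsto W (U : Filter ℕ) (nhds w) := hwconv
  refine ⟨w, fun l => hwK l (Set.mem_univ l), ?_⟩
  intro s hs
  have hBl : ∃ l : Fin k, {n : ℕ | infDist (W n l) (T s) ≤ ((n : ℝ) + 1)⁻¹} ∈ U := by
    by_contra hno
    push_neg at hno
    have hcompl : ∀ l : Fin k,
        {n : ℕ | infDist (W n l) (T s) ≤ ((n : ℝ) + 1)⁻¹}ᶜ ∈ U :=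
      fun l => (Ultrafilter.compl_mem_iff_notMem).2 (hno l)
    have hint : (⋂ l : Fin k, {n : ℕ | infDist (W n l) (T s) ≤ ((n : ℝ) + 1)⁻¹}ᶜ) ∈ U :=
      Filter.iInter_mem.2 hcompl
    have hemp : (⋂ l : Fin k, {n : ℕ | infDist (W n l) (T s) ≤ ((n : ℝ) + 1)⁻¹}ᶜ) = ∅ := by
      rw [Set.eq_empty_iff_forall_notMem]
      intro n hn
      simp only [Set.mem_iInter, Set.mem_compl_iff, Set.mem_setOf_eq, not_le] at hn
      obtain ⟨l, g, hgA, hgs, hdist⟩ := hWnet n s hs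
      have : infDist (W n l) (T s) ≤ ((n : ℝ) + 1)⁻¹ :=
        le_trans (infDist_le_dist_of_mem (⟨hgA, hgs⟩ : g ∈ T s)) hdist
      exact absurd this (not_le.2 (hn l))
    rw [hemp] at hint
    exact Filter.empty_notMem (U : Filter ℕ) hint
  obtain ⟨l, hl⟩ := hBl
  have htend1 : Filter.Tendsto (fun n => infDist (W n l) (T s)) (U : Filter ℕ)
      (nhds (infDist (w l) (T s))) := by
    have hc : Continuous fun p : (Fin d → ℝ) →L[ℝ] ℝ => infDist p (T s) :=
      continuous_infDist_pt _
    have hev : Filter.Tendsto (fun n => W n l) (U : Filter ℕ) (nhds (w l)) :=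
      ((continuous_apply l).tendsto w).comp hconv
    exact (hc.tendsto (w l)).comp hev
  have htend2 : Filter.Tendsto (fun n : ℕ => ((n : ℝ) + 1)⁻¹) (U : Filter ℕ) (nhds 0) :=
    (tendsto_one_div_add_atTop_nhds_zero_nat.congr (by
      intro n; rw [one_div])).mono_left hUle
  have hle : infDist (w l) (T s) ≤ 0 := by
    refine le_of_tendsto_of_tendsto htend1 htend2 ?_
    filter_upwards [hl] with n hn using hn
  have hzero : infDist (w l) (T s) = 0 := le_antisymm hle infDist_nonneg
  have hmemT : w l ∈ T s := ((hTclosed s).mem_iff_infDist_zero (hTne s hs)).2 hzero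
  exact ⟨l, hmemT.2⟩

/-! ### Polyhedra and facet counting -/

/-- The polyhedron determined by finitely many continuous linear functionals. -/
def Qset {d m : ℕ} (f : Fin m → ((Fin d → ℝ) →L[ℝ] ℝ)) (b : Fin m → ℝ) : Set (Fin d → ℝ) :=
  {x : Fin d → ℝ | ∀ i, f i x ≤ b i}

lemma hQconv (f : Fin m → ((Fin d → ℝ) →L[ℝ] ℝ)) (b : Fin m → ℝ) : Convex ℝ (Qset f b) := by
  have : Qset f b = ⋂ i, {x : Fin d → ℝ | f i x ≤ b i} := by
    ext x; simp [Qset]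
  rw [this]
  exact convex_iInter fun i => convex_halfSpace_le ⟨(f i).map_add, (f i).map_smul⟩ (b i)

lemma hQclosed (f : Fin m → ((Fin d → ℝ) →L[ℝ] ℝ)) (b : Fin m → ℝ) : IsClosed (Qset f b) := by
  have : Qset f b = ⋂ i, {x : Fin d → ℝ | f i x ≤ b i} := by
    ext x; simp [Qset]
  rw [this]
  exact isClosed_iInter fun i => isClosed_le (f i).continuous continuous_const

lemma hOopen (f : Fin m → ((Fin d → ℝ) →L[ℝ] ℝ)) (b : Fin m → ℝ) :
    IsOpen {x : Fin d → ℝ | ∀ i, f i x < b i} := by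
  have : {x : Fin d → ℝ | ∀ i, f i x < b i} = ⋂ i, {x : Fin d → ℝ | f i x < b i} := by
    ext x; simp
  rw [this]
  exact isOpen_iInter_of_finite fun i =>
    isOpen_lt (f i).continuous continuous_const

lemma hOint (f : Fin m → ((Fin d → ℝ) →L[ℝ] ℝ)) (b : Fin m → ℝ) :
    {x : Fin d → ℝ | ∀ i, f i x < b i} ⊆ interior (Qset f b) :=
  interior_maximal (fun x hx i => (hx i).le) (hOopen f b)

lemma no_interior_max (ℓ : (Fin d → ℝ) →L[ℝ] ℝ) (hℓ : ℓ ≠ 0)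
    {P : Set (Fin d → ℝ)} {z : Fin d → ℝ} (hz : z ∈ interior P)
    (hmax : ∀ y ∈ P, ℓ y ≤ ℓ z) : False := by
  obtain ⟨u, hu⟩ : ∃ u, ℓ u ≠ 0 := by
    by_contra h
    push_neg at h
    exact hℓ (by ext u; simp [h u])
  set u' : Fin d → ℝ := if 0 < ℓ u then u else -u with hu'
  have hupos : 0 < ℓ u' := by
    rw [hu']
    rcases lt_trichotomy (0 : ℝ) (ℓ u) with h | h | h
    · simp [h]
    · exact absurd h.symm hu
    · rw [if_neg (by linarith)]
      simp only [map_neg]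
      linarith
  have hune : u' ≠ 0 := fun h => by simp [h] at hupos
  have hnorm : 0 < ‖u'‖ := norm_pos_iff.2 hune
  obtain ⟨ε, hε, hball⟩ := Metric.isOpen_iff.1 isOpen_interior z hz
  set y := z + (ε / (2 * ‖u'‖)) • u' with hy
  have hyb : y ∈ Metric.ball z ε := by
    rw [hy, Metric.mem_ball, dist_eq_norm]
    simp only [add_sub_cancel_left]
    rw [norm_smul, Real.norm_eq_abs, abs_of_pos (by positivity)]
    rw [div_mul_eq_mul_div, mul_comm (2:ℝ) ‖u'‖, ← div_div]
    rw [mul_div_assoc, div_self hnorm.ne', mul_one]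
    linarith
  have hyP : y ∈ P := interior_subset (hball hyb)
  have := hmax y hyP
  rw [hy] at this
  simp only [map_add, map_smul, smul_eq_mul] at this
  nlinarith [mul_pos (div_pos hε (by positivity) : (0:ℝ) < ε / (2 * ‖u'‖)) hupos]

lemma stepA (f : Fin m → ((Fin d → ℝ) →L[ℝ] ℝ)) (b : Fin m → ℝ) (x₀ : Fin d → ℝ)
    (hs : ∀ i, f i x₀ < b i) (F : Set (Fin d → ℝ)) (hF : IsFacet (Qset f b) F) :
    ∃ i, ∀ x ∈ F, f i x = b i := by
  classical
  obtain ⟨hFne, hFexp, hFdim⟩ := hF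
  obtain ⟨ℓ, hℓ⟩ := hFexp hFne
  by_cases hzero : ℓ = 0
  · exfalso
    have hFQ : F = Qset f b := by
      rw [hℓ, hzero]; ext x; simp
    have hfull : affineSpan ℝ (Qset f b) = ⊤ := by
      refine (Convex.interior_nonempty_iff_affineSpan_eq_top (hQconv f b)).1 ?_
      exact ⟨x₀, hOint f b (fun i => hs i)⟩
    have : adim F = d := by
      rw [hFQ]
      unfold adim
      rw [hfull, AffineSubspace.direction_top, finrank_top]
      simp [Module.finrank_pi]
    omega
  · by_contra hno
    push_neg at hno
    have hpts : ∀ i, ∃ x ∈ F, f i x < b i := by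
      intro i
      obtain ⟨x, hxF, hxne⟩ := hno i
      have hxQ : x ∈ Qset f b := by rw [hℓ] at hxF; exact hxF.1
      exact ⟨x, hxF, lt_of_le_of_ne (hxQ i) hxne⟩
    choose g hgF hglt using hpts
    rcases Nat.eq_zero_or_pos m with hm | hm
    · have hQuniv : interior (Qset f b) = Set.univ := by
        rw [Set.eq_univ_iff_forall]
        intro x
        refine hOint f b (fun i => ?_)
        exact absurd i.2 (by omega)
      obtain ⟨z, hzF⟩ := hFne
      rw [hℓ] at hzF
      exact no_interior_max ℓ hzero (by rw [hQuniv]; trivial) hzF.2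
    · set z : Fin d → ℝ := (m : ℝ)⁻¹ • ∑ i, g i with hz
      have hFconv : Convex ℝ F := hFexp.convex (hQconv f b)
      have hzF : z ∈ F := by
        have hmem := hFconv.centerMass_mem (t := Finset.univ) (w := fun _ : Fin m => (1:ℝ))
          (z := g) (fun i _ => zero_le_one)
          (by simp only [Finset.sum_const, Finset.card_univ, Fintype.card_fin,
                nsmul_eq_mul, mul_one]; positivity)
          (fun i _ => hgF i)
        have hcm : Finset.univ.centerMass (fun _ : Fin m => (1:ℝ)) g = z := by
          rw [Finset.centerMass]
          simp only [Finset.sum_const, Finset.card_univ, Fintype.card_fin,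
            nsmul_eq_mul, mul_one, one_smul, hz]
        rwa [hcm] at hmem
      have hzint : z ∈ interior (Qset f b) := by
        refine hOint f b (fun i => ?_)
        rw [hz]
        simp only [map_smul, map_sum, smul_eq_mul]
        have hsum : ∑ j, f i (g j) < ∑ _j : Fin m, b i := by
          refine Finset.sum_lt_sum (fun j _ => ?_) ⟨i, Finset.mem_univ i, hglt i⟩
          have : g j ∈ Qset f b := by rw [hℓ] at hgF; exact (hgF j).1
          exact this i
        rw [Finset.sum_const, Finset.card_univ, Fintype.card_fin, nsmul_eq_mul] at hsum
        calc (m:ℝ)⁻¹ * ∑ j, f i (g j) < (m:ℝ)⁻¹ * ((m:ℝ) * b i) := by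
              apply mul_lt_mul_of_pos_left hsum
              positivity
          _ = b i := by field_simp
      rw [hℓ] at hzF
      exact no_interior_max ℓ hzero hzint hzF.2

lemma fi_ne_zero {f : Fin m → ((Fin d → ℝ) →L[ℝ] ℝ)} {b : Fin m → ℝ} {x₀ : Fin d → ℝ}
    (hs : ∀ i, f i x₀ < b i) {i : Fin m} {p : Fin d → ℝ}
    (hp : f i p = b i) : (f i : (Fin d → ℝ) →ₗ[ℝ] ℝ) ≠ 0 := by
  intro h0
  have h1 : f i p = 0 := by
    have : (f i : (Fin d → ℝ) →ₗ[ℝ] ℝ) p = 0 := by rw [h0]; rfl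
    simpa using this
  have h2 : f i x₀ = 0 := by
    have : (f i : (Fin d → ℝ) →ₗ[ℝ] ℝ) x₀ = 0 := by rw [h0]; rfl
    simpa using this
  rw [h1] at hp
  have := hs i
  rw [h2, ← hp] at this
  exact lt_irrefl _ this

lemma finrank_ker_eq {f : Fin m → ((Fin d → ℝ) →L[ℝ] ℝ)} {b : Fin m → ℝ} {x₀ : Fin d → ℝ}
    (hs : ∀ i, f i x₀ < b i) {i : Fin m} {p : Fin d → ℝ}
    (hp : f i p = b i) :
    Module.finrank ℝ (LinearMap.ker ((f i : (Fin d → ℝ) →ₗ[ℝ] ℝ))) + 1 = d := by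
  have hne := fi_ne_zero hs hp
  have hsurj : Function.Surjective ((f i : (Fin d → ℝ) →ₗ[ℝ] ℝ)) := by
    obtain ⟨u, hu⟩ : ∃ u, (f i : (Fin d → ℝ) →ₗ[ℝ] ℝ) u ≠ 0 := by
      by_contra h
      push_neg at h
      exact hne (LinearMap.ext fun u => by simpa using h u)
    intro c
    refine ⟨(c / ((f i : (Fin d → ℝ) →ₗ[ℝ] ℝ)) u) • u, ?_⟩
    rw [map_smul, smul_eq_mul, div_mul_cancel₀ _ hu]
  have h1 := LinearMap.finrank_range_add_finrank_ker ((f i : (Fin d → ℝ) →ₗ[ℝ] ℝ))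
  rw [LinearMap.range_eq_top.2 hsurj, finrank_top] at h1
  have h2 : Module.finrank ℝ ℝ = 1 := Module.finrank_self ℝ
  have h3 : Module.finrank ℝ (Fin d → ℝ) = d := by
    simp [Module.finrank_pi]
  omega

lemma stepB {f : Fin m → ((Fin d → ℝ) →L[ℝ] ℝ)} {b : Fin m → ℝ} {x₀ : Fin d → ℝ}
    (hs : ∀ i, f i x₀ < b i) {F₁ F₂ : Set (Fin d → ℝ)}
    (hF₁ : IsFacet (Qset f b) F₁) (hF₂ : IsFacet (Qset f b) F₂) {i : Fin m}
    (h1 : ∀ x ∈ F₁, f i x = b i) (h2 : ∀ x ∈ F₂, f i x = b i) : F₁ = F₂ := by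
  classical
  suffices key : ∀ F : Set (Fin d → ℝ), IsFacet (Qset f b) F →
      (∀ x ∈ F, f i x = b i) → F = Qset f b ∩ {x | f i x = b i} by
    rw [key F₁ hF₁ h1, key F₂ hF₂ h2]
  intro F hF hFeq
  obtain ⟨hFne, hFexp, hFdim⟩ := hF
  obtain ⟨p, hpF⟩ := hFne
  obtain ⟨ℓ, hℓ⟩ := hFexp ⟨p, hpF⟩
  have hpQ : p ∈ Qset f b := by rw [hℓ] at hpF; exact hpF.1
  have hpmax : ∀ y ∈ Qset f b, ℓ y ≤ ℓ p := by rw [hℓ] at hpF; exact hpF.2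
  have hpb : f i p = b i := hFeq p hpF
  set K := LinearMap.ker ((f i : (Fin d → ℝ) →ₗ[ℝ] ℝ)) with hK
  have hspan : affineSpan ℝ F = AffineSubspace.mk' p K := by
    have hle : affineSpan ℝ F ≤ AffineSubspace.mk' p K := by
      rw [affineSpan_le]
      intro x hx
      rw [SetLike.mem_coe, AffineSubspace.mem_mk']
      have : f i x = b i := hFeq x hx
      rw [hK, LinearMap.mem_ker]
      show (f i : (Fin d → ℝ) →ₗ[ℝ] ℝ) (x - p) = 0
      have : f i (x - p) = 0 := by rw [map_sub, this, hpb]; ring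
      simpa using this
    have hdir : (affineSpan ℝ F).direction = K := by
      refine Submodule.eq_of_le_of_finrank_le ?_ ?_
      · have := AffineSubspace.direction_le hle
        rwa [AffineSubspace.direction_mk'] at this
      · have hk1 := finrank_ker_eq hs hpb
        have hk2 : adim F + 1 = d := hFdim
        unfold adim at hk2
        rw [← hK] at hk1
        omega
    refine AffineSubspace.ext_of_direction_eq ?_ ⟨p, subset_affineSpan ℝ F hpF,
      AffineSubspace.self_mem_mk' p K⟩
    rw [hdir, AffineSubspace.direction_mk']
  have hconst : ∀ x ∈ affineSpan ℝ F, ℓ x = ℓ p := by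
    have hle : affineSpan ℝ F ≤ AffineSubspace.mk' p (LinearMap.ker (ℓ : (Fin d → ℝ) →ₗ[ℝ] ℝ)) := by
      rw [affineSpan_le]
      intro x hx
      rw [SetLike.mem_coe, AffineSubspace.mem_mk']
      have hxF : ℓ x = ℓ p := by
        have hxQ : x ∈ Qset f b := by rw [hℓ] at hx; exact hx.1
        have hxmax : ∀ y ∈ Qset f b, ℓ y ≤ ℓ x := by rw [hℓ] at hx; exact hx.2
        exact le_antisymm (hpmax x hxQ) (hxmax p hpQ)
      rw [LinearMap.mem_ker]
      show (ℓ : (Fin d → ℝ) →ₗ[ℝ] ℝ) (x - p) = 0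
      have : ℓ (x - p) = 0 := by rw [map_sub, hxF]; ring
      simpa using this
    intro x hx
    have hmem : x -ᵥ p ∈ LinearMap.ker ((ℓ : (Fin d → ℝ) →ₗ[ℝ] ℝ)) :=
      AffineSubspace.mem_mk'.1 (hle hx)
    have h0 : ℓ (x - p) = 0 := hmem
    rw [map_sub] at h0
    linarith
  apply Set.Subset.antisymm
  · intro x hx
    exact ⟨by rw [hℓ] at hx; exact hx.1, hFeq x hx⟩
  · rintro x ⟨hxQ, hxb⟩
    have hxspan : x ∈ affineSpan ℝ F := by
      rw [hspan, AffineSubspace.mem_mk']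
      rw [hK, LinearMap.mem_ker]
      show (f i : (Fin d → ℝ) →ₗ[ℝ] ℝ) (x - p) = 0
      have : f i (x - p) = 0 := by
        rw [map_sub, hxb, hpb]; ring
      simpa using this
    have hx_eq : ℓ x = ℓ p := hconst x hxspan
    rw [hℓ]
    exact ⟨hxQ, fun y hy => by rw [hx_eq]; exact hpmax y hy⟩

lemma facetsLE_Qset {f : Fin m → ((Fin d → ℝ) →L[ℝ] ℝ)} {b : Fin m → ℝ} {x₀ : Fin d → ℝ}
    (hs : ∀ i, f i x₀ < b i) : FacetsLE (Qset f b) m := by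
  classical
  rcases Nat.eq_zero_or_pos m with hm | hm
  · subst hm
    have hempty : {F : Set (Fin d → ℝ) | IsFacet (Qset f b) F} = ∅ := by
      rw [Set.eq_empty_iff_forall_notMem]
      intro F hF
      obtain ⟨i, -⟩ := stepA f b x₀ hs F hF
      exact i.elim0
    rw [FacetsLE, hempty, Set.encard_empty]
    exact le_refl _
  · set φ : Set (Fin d → ℝ) → Fin m := fun F =>
      if h : IsFacet (Qset f b) F then Classical.choose (stepA f b x₀ hs F h)
      else ⟨0, hm⟩ with hφ
    have hinj : Set.InjOn φ {F : Set (Fin d → ℝ) | IsFacet (Qset f b) F} := by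
      intro F₁ hF₁ F₂ hF₂ heq
      simp only [Set.mem_setOf_eq] at hF₁ hF₂
      rw [hφ] at heq
      simp only [hF₁, hF₂, dif_pos] at heq
      have h1 := Classical.choose_spec (stepA f b x₀ hs F₁ hF₁)
      have h2 := Classical.choose_spec (stepA f b x₀ hs F₂ hF₂)
      rw [heq] at h1
      exact stepB hs hF₁ hF₂ h1 h2
    rw [FacetsLE]
    calc {F : Set (Fin d → ℝ) | IsFacet (Qset f b) F}.encard
        = (φ '' {F : Set (Fin d → ℝ) | IsFacet (Qset f b) F}).encard :=
          (hinj.encard_image).symm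
      _ ≤ (Set.univ : Set (Fin m)).encard := Set.encard_mono (Set.subset_univ _)
      _ ≤ (m : ℕ∞) := by
          rw [Set.encard_univ]
          simp

lemma interior_Qset_strict {f : Fin m → ((Fin d → ℝ) →L[ℝ] ℝ)} {b : Fin m → ℝ} {x₀ : Fin d → ℝ}
    (hs : ∀ i, f i x₀ < b i) :
    interior (Qset f b) ⊆ {x : Fin d → ℝ | ∀ i, f i x < b i} := by
  intro x hx i
  by_contra h
  push_neg at h
  have hxQ : x ∈ Qset f b := interior_subset hx
  have hxb : f i x = b i := le_antisymm (hxQ i) h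
  have hne : (f i) ≠ 0 := by
    intro h0
    exact fi_ne_zero hs hxb (by rw [h0]; rfl)
  exact no_interior_max (f i) hne hx (fun y hy => by rw [hxb]; exact hy i)

end Aux

theorem f_le_h {d : ℕ} (S : Set (Fin d → ℝ)) (k : ℕ) (hk : hellyNumber S = (k : ℕ∞)) :
    (∀ L, IsFreeSet S L → FullDim L →
      ∃ Q, IsPolyhedron Q ∧ IsFreeSet S Q ∧ FacetsLE Q k ∧ L ⊆ Q) ∧
    (∀ L, IsMaxFree S L → FullDim L → IsPolyhedron L ∧ FacetsLE L k) := by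
  have hH : HellyCond S k := hellyCond_of_hellyNumber_eq hk
  have part1 : ∀ L, IsFreeSet S L → FullDim L →
      ∃ Q, IsPolyhedron Q ∧ IsFreeSet S Q ∧ FacetsLE Q k ∧ L ⊆ Q := by
    intro L hLfree hLfull
    obtain ⟨hLc, hLv, hLint⟩ := hLfree
    obtain ⟨x₀, hx₀⟩ : (interior L).Nonempty :=
      (Convex.interior_nonempty_iff_affineSpan_eq_top hLv).2 hLfull
    obtain ⟨w, hwA, hwsep⟩ := exists_cover hH hLv hLint hx₀
    set bb : Fin k → ℝ := fun l => 1 + w l x₀ with hbb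
    have hslater : ∀ l, w l x₀ < bb l := by
      intro l; rw [hbb]; simp
    refine ⟨Qset w bb, ?_, ?_, ?_, ?_⟩
    · exact ⟨k, fun l => (w l : (Fin d → ℝ) →ₗ[ℝ] ℝ), bb, by
        ext x
        simp [Qset]⟩
    · refine ⟨hQclosed w bb, hQconv w bb, ?_⟩
      rw [Set.eq_empty_iff_forall_notMem]
      rintro s ⟨hsint, hsS⟩
      obtain ⟨l, hl⟩ := hwsep s hsS
      have := interior_Qset_strict hslater hsint l
      rw [hbb] at this
      simp only at this
      linarith
    · exact facetsLE_Qset hslater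
    · intro y hy l
      rw [hbb]
      exact hwA l y hy
  refine ⟨part1, ?_⟩
  intro L hLmax hLfull
  obtain ⟨Q, hQpoly, hQfree, hQfacets, hLQ⟩ := part1 L hLmax.1 hLfull
  have hQL : Q = L := hLmax.2 Q hQfree hLQ
  rw [← hQL]
  exact ⟨hQpoly, hQfacets⟩
end

section
/- Let S ⊆ ℝ^d be closed and C ⊆ ℝ^d nonempty and convex. Then f(C + S) ≤ f(S): if every d-dimensional S-free closed convex set is contained in an S-free polyhedron with at most k facets, then the same holds with S replaced by the Minkowski sum C + S. -/
open Pointwise Set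

namespace FAux

variable {d : ℕ}

lemma exists_pos_smul_mem {U : Set (Fin d → ℝ)} (hU : IsOpen U) {x : Fin d → ℝ}
    (hx : x ∈ U) (v : Fin d → ℝ) : ∃ t : ℝ, 0 < t ∧ x + t • v ∈ U := by
  obtain ⟨ε, hε, hball⟩ := Metric.isOpen_iff.1 hU x hx
  set t : ℝ := ε / 2 / (‖v‖ + 1) with ht
  have hv1 : (0:ℝ) < ‖v‖ + 1 := by positivity
  refine ⟨t, by positivity, hball ?_⟩
  rw [Metric.mem_ball, dist_eq_norm]
  have h0 : x + t • v - x = t • v := by abel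
  rw [h0, norm_smul, Real.norm_eq_abs, abs_of_pos (by positivity)]
  have h1 : t * ‖v‖ < t * (‖v‖ + 1) := by
    apply mul_lt_mul_of_pos_left (by linarith) (by positivity)
  have h2 : t * (‖v‖ + 1) = ε / 2 := div_mul_cancel₀ _ (by positivity)
  linarith

lemma isOpen_image_sub {U : Set (Fin d → ℝ)} (hU : IsOpen U) (c : Fin d → ℝ) :
    IsOpen ((fun y => y - c) '' U) := by
  have h : (fun y : Fin d → ℝ => y - c) = fun y => y + (-c) :=
    funext fun y => sub_eq_add_neg y c
  rw [h]
  exact (Homeomorph.addRight (-c)).isOpenMap U hU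

lemma poly_convex {m : ℕ} (u : Fin m → ((Fin d → ℝ) →ₗ[ℝ] ℝ)) (b : Fin m → ℝ) :
    Convex ℝ {x : Fin d → ℝ | ∀ i, u i x ≤ b i} := by
  intro x hx y hy a c ha hc hac
  intro i
  have h1 := hx i
  have h2 := hy i
  simp only [map_add, map_smul, smul_eq_mul]
  have h3 : a * b i + c * b i = b i := by rw [← add_mul, hac, one_mul]
  nlinarith [mul_le_mul_of_nonneg_left h1 ha, mul_le_mul_of_nonneg_left h2 hc]

lemma poly_closed {m : ℕ} (u : Fin m → ((Fin d → ℝ) →ₗ[ℝ] ℝ)) (b : Fin m → ℝ) :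
    IsClosed {x : Fin d → ℝ | ∀ i, u i x ≤ b i} := by
  have h : {x : Fin d → ℝ | ∀ i, u i x ≤ b i} = ⋂ i, (u i) ⁻¹' (Set.Iic (b i)) := by
    ext x; simp [Set.mem_iInter]
  rw [h]
  exact isClosed_iInter fun i =>
    IsClosed.preimage (LinearMap.continuous_of_finiteDimensional (u i)) isClosed_Iic

lemma interior_strict {m : ℕ} {u : Fin m → ((Fin d → ℝ) →ₗ[ℝ] ℝ)} {b : Fin m → ℝ}
    {p : Fin d → ℝ} (hp : p ∈ interior {x : Fin d → ℝ | ∀ i, u i x ≤ b i}) {i : Fin m}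
    (hnz : u i ≠ 0) : u i p < b i := by
  obtain ⟨w, hw⟩ : ∃ w, u i w ≠ 0 := by
    by_contra h
    push_neg at h
    exact hnz (LinearMap.ext fun w => by simp [h w])
  set v := (u i w)⁻¹ • w with hv_def
  have hv : u i v = 1 := by
    simp only [hv_def, map_smul, smul_eq_mul]
    exact inv_mul_cancel₀ hw
  obtain ⟨t, ht, hmem⟩ := exists_pos_smul_mem isOpen_interior hp v
  have h1 := (interior_subset hmem) i
  simp only [Set.mem_setOf_eq, map_add, map_smul, smul_eq_mul, hv, mul_one] at h1
  linarith

variable {d : ℕ}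

lemma exists_min_rep :
    ∀ (m : ℕ) (u : Fin m → ((Fin d → ℝ) →ₗ[ℝ] ℝ)) (b : Fin m → ℝ),
      {x : Fin d → ℝ | ∀ i, u i x ≤ b i}.Nonempty →
      ∃ (m' : ℕ) (u' : Fin m' → ((Fin d → ℝ) →ₗ[ℝ] ℝ)) (b' : Fin m' → ℝ),
        {x : Fin d → ℝ | ∀ i, u' i x ≤ b' i} = {x : Fin d → ℝ | ∀ i, u i x ≤ b i} ∧
        (∀ i, u' i ≠ 0) ∧
        (∀ i, ∃ y, (∀ j, j ≠ i → u' j y ≤ b' j) ∧ b' i < u' i y) := by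
  intro m
  induction m using Nat.strong_induction_on with
  | _ m ih =>
    intro u b hne
    by_cases hred : ∃ i, ∀ y, (∀ j, j ≠ i → u j y ≤ b j) → u i y ≤ b i
    · obtain ⟨i, hi⟩ := hred
      have hm : m ≠ 0 := by rintro rfl; exact i.elim0
      obtain ⟨n, rfl⟩ : ∃ n, m = n + 1 := ⟨m - 1, by omega⟩
      have hset : {x : Fin d → ℝ | ∀ j, u (i.succAbove j) x ≤ b (i.succAbove j)}
          = {x : Fin d → ℝ | ∀ j, u j x ≤ b j} := by
        ext x
        simp only [Set.mem_setOf_eq]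
        constructor
        · intro h j
          by_cases hji : j = i
          · subst hji
            apply hi
            intro j' hj'
            obtain ⟨z, rfl⟩ := Fin.exists_succAbove_eq hj'
            exact h z
          · obtain ⟨z, rfl⟩ := Fin.exists_succAbove_eq hji
            exact h z
        · intro h j
          exact h _
      obtain ⟨m', u', b', heq, hnz, hirr⟩ :=
        ih n (Nat.lt_succ_self n) (fun j => u (i.succAbove j)) (fun j => b (i.succAbove j))
          (by rw [hset]; exact hne)
      exact ⟨m', u', b', heq.trans hset, hnz, hirr⟩
    · push_neg at hred
      refine ⟨m, u, b, rfl, ?_, hred⟩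
      intro i h0
      obtain ⟨y, _, hy2⟩ := hred i
      obtain ⟨x, hx⟩ := hne
      have h1 := hx i
      rw [h0] at hy2 h1
      simp only [LinearMap.zero_apply] at hy2 h1
      linarith
variable {d : ℕ}

lemma direction_le_ker {u : (Fin d → ℝ) →ₗ[ℝ] ℝ} {r : ℝ} {F : Set (Fin d → ℝ)}
    (hF : ∀ x ∈ F, u x = r) {z : Fin d → ℝ} (hz : z ∈ F) :
    affineSpan ℝ F ≤ AffineSubspace.mk' z (LinearMap.ker u) := by
  rw [affineSpan_le]
  intro x hx
  show x ∈ AffineSubspace.mk' z (LinearMap.ker u)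
  rw [AffineSubspace.mem_mk']
  show x - z ∈ LinearMap.ker u
  rw [LinearMap.mem_ker, map_sub, hF x hx, hF z hz, sub_self]

lemma finrank_ker_eq {u : (Fin d → ℝ) →ₗ[ℝ] ℝ} (hu : u ≠ 0) :
    Module.finrank ℝ (LinearMap.ker u) + 1 = d := by
  have h := Module.Dual.finrank_ker_add_one_of_ne_zero (f := u) hu
  rwa [Module.finrank_fin_fun] at h

lemma adim_facet {u : (Fin d → ℝ) →ₗ[ℝ] ℝ} (hu : u ≠ 0) {r : ℝ} {F : Set (Fin d → ℝ)}
    (hF : ∀ x ∈ F, u x = r) {z : Fin d → ℝ} (hz : z ∈ F) {ε : ℝ} (hε : 0 < ε)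
    (hball : ∀ w, w ∈ LinearMap.ker u → ‖w‖ < ε → z + w ∈ F) :
    adim F + 1 = d := by
  have hle : (affineSpan ℝ F).direction ≤ LinearMap.ker u :=
    (AffineSubspace.direction_le (direction_le_ker hF hz)).trans_eq
      (AffineSubspace.direction_mk' _ _)
  have hge : LinearMap.ker u ≤ (affineSpan ℝ F).direction := by
    intro w hw
    set c : ℝ := ε / 2 / (‖w‖ + 1) with hc
    have hwn : (0:ℝ) < ‖w‖ + 1 := by positivity
    have hc0 : 0 < c := by positivity
    have hw' : c • w ∈ LinearMap.ker u := Submodule.smul_mem _ _ hw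
    have hwsmall : ‖c • w‖ < ε := by
      rw [norm_smul, Real.norm_eq_abs, abs_of_pos hc0]
      have h1 : c * ‖w‖ < c * (‖w‖ + 1) := mul_lt_mul_of_pos_left (by linarith) hc0
      have h2 : c * (‖w‖ + 1) = ε / 2 := div_mul_cancel₀ _ (by positivity)
      linarith
    have hmem : z + c • w ∈ F := hball _ hw' hwsmall
    have hd : (z + c • w) -ᵥ z ∈ (affineSpan ℝ F).direction :=
      AffineSubspace.vsub_mem_direction (mem_affineSpan ℝ hmem) (mem_affineSpan ℝ hz)
    have heq : (z + c • w) -ᵥ z = c • w := by rw [vsub_eq_sub]; abel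
    rw [heq] at hd
    have hwc : w = c⁻¹ • (c • w) := by
      rw [smul_smul, inv_mul_cancel₀ (ne_of_gt hc0), one_smul]
    rw [hwc]
    exact Submodule.smul_mem _ _ hd
  have hdir : (affineSpan ℝ F).direction = LinearMap.ker u := le_antisymm hle hge
  rw [adim, hdir]
  exact finrank_ker_eq hu

lemma mem_span_of_hyperplane {u : (Fin d → ℝ) →ₗ[ℝ] ℝ} (hu : u ≠ 0) {r : ℝ}
    {F : Set (Fin d → ℝ)} (hF : ∀ x ∈ F, u x = r) {z : Fin d → ℝ} (hz : z ∈ F)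
    (hdim : adim F + 1 = d) : ∀ x, u x = r → x ∈ affineSpan ℝ F := by
  have hle : affineSpan ℝ F ≤ AffineSubspace.mk' z (LinearMap.ker u) :=
    direction_le_ker hF hz
  have hdirle : (affineSpan ℝ F).direction ≤ LinearMap.ker u :=
    (AffineSubspace.direction_le hle).trans_eq (AffineSubspace.direction_mk' _ _)
  have hfr : Module.finrank ℝ (affineSpan ℝ F).direction
      = Module.finrank ℝ (LinearMap.ker u) := by
    have h2 := finrank_ker_eq hu
    rw [adim] at hdim
    omega
  have hdir : (affineSpan ℝ F).direction = LinearMap.ker u :=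
    Submodule.eq_of_le_of_finrank_eq hdirle hfr
  have hspan : affineSpan ℝ F = AffineSubspace.mk' z (LinearMap.ker u) := by
    apply AffineSubspace.ext_of_direction_eq
    · rw [hdir, AffineSubspace.direction_mk']
    · exact ⟨z, mem_affineSpan ℝ hz, AffineSubspace.self_mem_mk' _ _⟩
  intro x hx
  rw [hspan, AffineSubspace.mem_mk']
  show x - z ∈ LinearMap.ker u
  rw [LinearMap.mem_ker, map_sub, hx, hF z hz, sub_self]

lemma isExposed_tight {Q : Set (Fin d → ℝ)} (u : (Fin d → ℝ) →ₗ[ℝ] ℝ) (r : ℝ)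
    (hub : ∀ x ∈ Q, u x ≤ r) : IsExposed ℝ Q {x ∈ Q | u x = r} := by
  intro hne
  obtain ⟨z, hzQ, hzr⟩ := hne
  refine ⟨LinearMap.toContinuousLinearMap u, ?_⟩
  ext x
  simp only [LinearMap.coe_toContinuousLinearMap', Set.mem_setOf_eq]
  constructor
  · rintro ⟨hxQ, hxr⟩
    exact ⟨hxQ, fun y hy => hxr ▸ hub y hy⟩
  · rintro ⟨hxQ, hmax⟩
    refine ⟨hxQ, le_antisymm (hub x hxQ) ?_⟩
    calc r = u z := hzr.symm
    _ ≤ u x := hmax z hzQ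


noncomputable def levelSpace (l : (Fin d → ℝ) →L[ℝ] ℝ) (r : ℝ) : AffineSubspace ℝ (Fin d → ℝ) where
  carrier := {x | l x = r}
  smul_vsub_vadd_mem' := by
    intro t p₁ p₂ p₃ h₁ h₂ h₃
    simp only [Set.mem_setOf_eq] at *
    have h : t • (p₁ -ᵥ p₂) +ᵥ p₃ = t • (p₁ - p₂) + p₃ := by
      rw [vsub_eq_sub, vadd_eq_add]
    rw [h, map_add, map_smul, map_sub, h₁, h₂, h₃, sub_self, smul_zero, zero_add]

lemma facet_val_const {Q F : Set (Fin d → ℝ)} {l : (Fin d → ℝ) →L[ℝ] ℝ}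
    (hFeq : F = {x ∈ Q | ∀ y ∈ Q, l y ≤ l x}) {x y : Fin d → ℝ} (hx : x ∈ F) (hy : y ∈ F) :
    l x = l y := by
  rw [hFeq] at hx hy
  exact le_antisymm (hy.2 x hx.1) (hx.2 y hy.1)

/-- Every facet of a polyhedron with nonzero normals and full-dimensional span lies
in one of the constraint hyperplanes. -/
lemma facet_subset_hyperplane {m : ℕ} {u : Fin m → ((Fin d → ℝ) →ₗ[ℝ] ℝ)} {b : Fin m → ℝ}
    (hnz : ∀ i, u i ≠ 0)
    (hfd : affineSpan ℝ {x : Fin d → ℝ | ∀ i, u i x ≤ b i} = ⊤)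
    {F : Set (Fin d → ℝ)} (hF : IsFacet {x : Fin d → ℝ | ∀ i, u i x ≤ b i} F) :
    ∃ i, ∀ x ∈ F, u i x = b i := by
  set Q := {x : Fin d → ℝ | ∀ i, u i x ≤ b i} with hQdef
  obtain ⟨hFne, hFexp, hFdim⟩ := hF
  obtain ⟨l, hFeq⟩ := hFexp hFne
  by_contra hcon
  push_neg at hcon
  -- for every i there is a point of F where constraint i is strict
  have hstrict : ∀ i, ∃ x ∈ F, u i x < b i := by
    intro i
    obtain ⟨x, hxF, hxne⟩ := hcon i
    have hxQ : x ∈ Q := by rw [hFeq] at hxF; exact hxF.1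
    exact ⟨x, hxF, lt_of_le_of_ne (hxQ i) hxne⟩
  -- find a point of F in the interior of Q
  have hxbar : ∃ x ∈ F, ∀ i, u i x < b i := by
    rcases Nat.eq_zero_or_pos m with hm | hm
    · obtain ⟨x, hx⟩ := hFne
      exact ⟨x, hx, fun i => absurd i.isLt (by omega)⟩
    · choose xs hxsF hxslt using hstrict
      have hQconv : Convex ℝ Q := poly_convex u b
      have hFconv : Convex ℝ F := hFexp.convex hQconv
      set w : Fin m → ℝ := fun _ => (m : ℝ)⁻¹ with hw
      have hm0 : (0:ℝ) < (m:ℝ) := by exact_mod_cast hm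
      have hwsum : ∑ j : Fin m, w j = 1 := by
        simp [hw, Finset.sum_const, Finset.card_univ]
        field_simp
      have hmemF : ∑ j : Fin m, w j • xs j ∈ F :=
        hFconv.sum_mem (fun j _ => by positivity) hwsum (fun j _ => hxsF j)
      refine ⟨_, hmemF, fun i => ?_⟩
      have hmap : u i (∑ j : Fin m, w j • xs j) = ∑ j : Fin m, w j * u i (xs j) := by
        rw [map_sum]; simp [smul_eq_mul]
      rw [hmap]
      have hFQ : F ⊆ Q := by rw [hFeq]; exact fun x hx => hx.1
      have hlt : ∑ j : Fin m, w j * u i (xs j) < ∑ j : Fin m, w j * b i := by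
        apply Finset.sum_lt_sum
        · intro j _
          exact mul_le_mul_of_nonneg_left ((hFQ (hxsF j)) i) (by positivity)
        · exact ⟨i, Finset.mem_univ i, mul_lt_mul_of_pos_left (hxslt i) (by positivity)⟩
      have hsum : ∑ j : Fin m, w j * b i = b i := by
        rw [← Finset.sum_mul, hwsum, one_mul]
      linarith
  obtain ⟨xb, hxbF, hxblt⟩ := hxbar
  -- xb is in the interior of Q
  have hV : IsOpen {x : Fin d → ℝ | ∀ i, u i x < b i} := by
    have h : {x : Fin d → ℝ | ∀ i, u i x < b i} = ⋂ i, {x : Fin d → ℝ | u i x < b i} := by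
      ext x; simp [Set.mem_iInter]
    rw [h]
    exact isOpen_iInter_of_finite fun i =>
      isOpen_lt (LinearMap.continuous_of_finiteDimensional (u i)) continuous_const
  have hVQ : {x : Fin d → ℝ | ∀ i, u i x < b i} ⊆ Q := fun x hx i => le_of_lt (hx i)
  have hxbint : xb ∈ interior Q := interior_maximal hVQ hV hxblt
  -- the exposing functional must vanish
  have hl0 : ∀ v, l v = 0 := by
    have hmax : ∀ y ∈ Q, l y ≤ l xb := by rw [hFeq] at hxbF; exact hxbF.2
    have haux : ∀ v, l v ≤ 0 := by
      intro v
      obtain ⟨t, ht, hmem⟩ := exists_pos_smul_mem isOpen_interior hxbint v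
      have := hmax _ (interior_subset hmem)
      simp only [map_add, map_smul, smul_eq_mul] at this
      nlinarith
    intro v
    have h1 := haux v
    have h2 := haux (-v)
    simp only [map_neg] at h2
    linarith
  -- then F = Q
  have hFQ2 : F = Q := by
    rw [hFeq]
    ext x
    simp only [Set.mem_setOf_eq]
    constructor
    · exact fun h => h.1
    · intro h
      refine ⟨h, fun y _ => ?_⟩
      have := hl0 y
      have := hl0 x
      simp_all
  have hadimQ : adim Q = d := by
    rw [adim, hfd, AffineSubspace.direction_top, finrank_top, Module.finrank_fin_fun]
  rw [hFQ2, hadimQ] at hFdim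
  omega

/-- The number of facets of a polyhedron is at most the number of (nonzero-normal)
defining inequalities, provided it is full-dimensional. -/
lemma facets_le_of_rep {m : ℕ} (u : Fin m → ((Fin d → ℝ) →ₗ[ℝ] ℝ)) (b : Fin m → ℝ)
    (hnz : ∀ i, u i ≠ 0)
    (hfd : affineSpan ℝ {x : Fin d → ℝ | ∀ i, u i x ≤ b i} = ⊤) :
    FacetsLE {x : Fin d → ℝ | ∀ i, u i x ≤ b i} m := by
  classical
  set Q := {x : Fin d → ℝ | ∀ i, u i x ≤ b i} with hQdef
  -- two facets lying in the same hyperplane are equal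
  have uniq : ∀ (F₁ F₂ : Set (Fin d → ℝ)) (i : Fin m), IsFacet Q F₁ → IsFacet Q F₂ →
      (∀ x ∈ F₁, u i x = b i) → (∀ x ∈ F₂, u i x = b i) → F₁ ⊆ F₂ := by
    intro F₁ F₂ i h₁ h₂ hp₁ hp₂
    obtain ⟨h₁ne, h₁exp, h₁dim⟩ := h₁
    obtain ⟨h₂ne, h₂exp, h₂dim⟩ := h₂
    obtain ⟨l₂, h₂eq⟩ := h₂exp h₂ne
    obtain ⟨z₂, hz₂⟩ := h₂ne
    intro x hx₁
    -- x lies in the hyperplane, hence in the affine span of F₂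
    have hxspan : x ∈ affineSpan ℝ F₂ :=
      mem_span_of_hyperplane (hnz i) hp₂ hz₂ h₂dim x (hp₁ x hx₁)
    -- l₂ is constant on the affine span of F₂
    have hspan_le : affineSpan ℝ F₂ ≤ levelSpace l₂ (l₂ z₂) := by
      rw [affineSpan_le]
      intro y hy
      show l₂ y = l₂ z₂
      exact facet_val_const h₂eq hy hz₂
    have hxl : l₂ x = l₂ z₂ := hspan_le hxspan
    -- x belongs to Q
    have hxQ : x ∈ Q := h₁exp.subset hx₁
    have hz₂' := hz₂
    rw [h₂eq] at hz₂'
    rw [h₂eq]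
    exact ⟨hxQ, fun y hy => (hz₂'.2 y hy).trans (le_of_eq hxl.symm)⟩
  have key : ∀ F, IsFacet Q F → ∃ i, ∀ x ∈ F, u i x = b i :=
    fun F hF => facet_subset_hyperplane hnz hfd hF
  rcases Nat.eq_zero_or_pos m with hm | hm
  · have hempty : {F : Set (Fin d → ℝ) | IsFacet Q F} = ∅ := by
      rw [Set.eq_empty_iff_forall_notMem]
      intro F hF
      obtain ⟨i, -⟩ := key F hF
      exact absurd i.isLt (by omega)
    rw [FacetsLE, hempty]
    simp
  · have hle : {F : Set (Fin d → ℝ) | IsFacet Q F}.encard ≤ (univ : Set (Fin m)).encard := by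
      apply Set.encard_le_encard_of_injOn
        (f := fun F => if h : IsFacet Q F then (key F h).choose else ⟨0, hm⟩)
      · exact fun F _ => Set.mem_univ _
      · intro F₁ h₁ F₂ h₂ heq
        simp only [Set.mem_setOf_eq] at h₁ h₂
        dsimp only at heq
        rw [dif_pos h₁, dif_pos h₂] at heq
        have hs₁ := (key F₁ h₁).choose_spec
        have hs₂ := (key F₂ h₂).choose_spec
        rw [heq] at hs₁
        exact Set.Subset.antisymm (uniq F₁ F₂ _ h₁ h₂ hs₁ hs₂) (uniq F₂ F₁ _ h₂ h₁ hs₂ hs₁)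
    rw [FacetsLE]
    refine hle.trans ?_
    rw [Set.encard_univ]
    simp

/-- Each irredundant constraint of a full-dimensional polyhedron defines a facet,
distinct constraints give distinct facets; hence the number of constraints is at most the
number of facets. -/
lemma min_rep_card_le {m : ℕ} (u : Fin m → ((Fin d → ℝ) →ₗ[ℝ] ℝ)) (b : Fin m → ℝ)
    (hint : (interior {x : Fin d → ℝ | ∀ i, u i x ≤ b i}).Nonempty)
    (hnz : ∀ i, u i ≠ 0)
    (hirr : ∀ i, ∃ y, (∀ j, j ≠ i → u j y ≤ b j) ∧ b i < u i y)
    {k : ℕ} (hf : FacetsLE {x : Fin d → ℝ | ∀ i, u i x ≤ b i} k) : m ≤ k := by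
  classical
  set Q := {x : Fin d → ℝ | ∀ i, u i x ≤ b i} with hQdef
  obtain ⟨p, hp⟩ := hint
  have hps : ∀ j, u j p < b j := fun j => interior_strict hp (hnz j)
  -- construct a point on each constraint hyperplane, strictly inside all other constraints
  have hz : ∀ i : Fin m, ∃ z, u i z = b i ∧ ∀ j, j ≠ i → u j z < b j := by
    intro i
    obtain ⟨y, hy1, hy2⟩ := hirr i
    have hyp : u i p < u i y := lt_trans (hps i) hy2
    have hdne : u i y - u i p ≠ 0 := ne_of_gt (sub_pos.2 hyp)
    set t : ℝ := (b i - u i p) / (u i y - u i p) with ht_def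
    have ht0 : 0 < t := div_pos (by linarith [hps i]) (by linarith)
    have ht1 : t < 1 := (div_lt_one (by linarith)).2 (by linarith [hps i])
    refine ⟨p + t • (y - p), ?_, ?_⟩
    · simp only [map_add, map_smul, map_sub, smul_eq_mul]
      rw [ht_def, div_mul_cancel₀ _ hdne]
      ring
    · intro j hj
      have hyj := hy1 j hj
      have hpj := hps j
      simp only [map_add, map_smul, map_sub, smul_eq_mul]
      nlinarith [mul_le_mul_of_nonneg_left hyj ht0.le, mul_lt_mul_of_pos_left hpj (by linarith : (0:ℝ) < 1 - t)]
  choose z hz1 hz2 using hz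
  have hzQ : ∀ i, z i ∈ Q := by
    intro i j
    by_cases hji : j = i
    · subst hji; exact le_of_eq (hz1 j)
    · exact le_of_lt (hz2 i j hji)
  -- each constraint defines a facet
  have hfacet : ∀ i, IsFacet Q {x ∈ Q | u i x = b i} := by
    intro i
    have hub : ∀ x ∈ Q, u i x ≤ b i := fun x hx => hx i
    have hziF : z i ∈ {x ∈ Q | u i x = b i} := ⟨hzQ i, hz1 i⟩
    have hVopen : IsOpen {x : Fin d → ℝ | ∀ j, j ≠ i → u j x < b j} := by
      have h : {x : Fin d → ℝ | ∀ j, j ≠ i → u j x < b j}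
          = ⋂ j, {x : Fin d → ℝ | j ≠ i → u j x < b j} := by
        ext x; simp [Set.mem_iInter]
      rw [h]
      refine isOpen_iInter_of_finite fun j => ?_
      by_cases hji : j = i
      · subst hji
        have : {x : Fin d → ℝ | j ≠ j → u j x < b j} = Set.univ := by
          ext x; simp
        rw [this]; exact isOpen_univ
      · have h2 : {x : Fin d → ℝ | j ≠ i → u j x < b j} = {x : Fin d → ℝ | u j x < b j} := by
          ext x; simp [hji]
        rw [h2]
        exact isOpen_lt (LinearMap.continuous_of_finiteDimensional (u j)) continuous_const
    obtain ⟨ε, hε, hball⟩ := Metric.isOpen_iff.1 hVopen (z i) (fun j hj => hz2 i j hj)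
    have hballF : ∀ w, w ∈ LinearMap.ker (u i) → ‖w‖ < ε → z i + w ∈ {x ∈ Q | u i x = b i} := by
      intro w hw hwn
      have hziw : u i (z i + w) = b i := by
        rw [map_add, LinearMap.mem_ker.1 hw, add_zero, hz1 i]
      have hmem : z i + w ∈ {x : Fin d → ℝ | ∀ j, j ≠ i → u j x < b j} := by
        apply hball
        rw [Metric.mem_ball, dist_eq_norm]
        simpa using hwn
      refine ⟨?_, hziw⟩
      intro j
      by_cases hji : j = i
      · subst hji; exact le_of_eq hziw
      · exact le_of_lt (hmem j hji)
    exact ⟨⟨z i, hziF⟩, isExposed_tight (u i) (b i) hub,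
      adim_facet (hnz i) (fun x hx => hx.2) hziF hε hballF⟩
  -- distinct constraints give distinct facets
  have hinj : ∀ i j : Fin m, {x ∈ Q | u i x = b i} = {x ∈ Q | u j x = b j} → i = j := by
    intro i j hij
    by_contra hne
    have h1 : z i ∈ {x ∈ Q | u j x = b j} := hij ▸ ⟨hzQ i, hz1 i⟩
    have h2 : u j (z i) < b j := hz2 i j (Ne.symm hne)
    exact absurd h1.2 (ne_of_lt h2)
  have hmaps : Set.MapsTo (fun i : Fin m => {x ∈ Q | u i x = b i}) Set.univ
      {F : Set (Fin d → ℝ) | IsFacet Q F} := fun i _ => hfacet i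
  have hinj' : Set.InjOn (fun i : Fin m => {x ∈ Q | u i x = b i}) Set.univ :=
    fun i _ j _ h => hinj i j h
  have hcount := Set.encard_le_encard_of_injOn hmaps hinj'
  rw [Set.encard_univ] at hcount
  simp only [ENat.card_eq_coe_fintype_card, Fintype.card_fin] at hcount
  have h2 := hcount.trans hf
  exact_mod_cast h2

end FAux

open FAux in
theorem f_add_convex {d : ℕ} (S C : Set (Fin d → ℝ)) (hS : IsClosed S)
    (hCne : C.Nonempty) (hCconv : Convex ℝ C) (k : ℕ)
    (hk : ∀ L, IsFreeSet S L → FullDim L →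
      ∃ Q, IsPolyhedron Q ∧ IsFreeSet S Q ∧ FacetsLE Q k ∧ L ⊆ Q) :
    ∀ L, IsFreeSet (C + S) L → FullDim L →
      ∃ Q, IsPolyhedron Q ∧ IsFreeSet (C + S) Q ∧ FacetsLE Q k ∧ L ⊆ Q := by
  intro L hLfree hLfd
  obtain ⟨hLc, hLconv, hLS⟩ := hLfree
  obtain ⟨c₀, hc₀⟩ := hCne
  obtain ⟨p, hp⟩ := (hLconv.interior_nonempty_iff_affineSpan_eq_top).2 hLfd
  set D : Set (Fin d → ℝ) := L - C with hD
  have hDconv : Convex ℝ D := hLconv.sub hCconv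
  have hz₀ : p - c₀ ∈ interior D := by
    have hsub : (fun x => x - c₀) '' interior L ⊆ D := by
      rintro _ ⟨x, hx, rfl⟩
      exact Set.sub_mem_sub (interior_subset hx) hc₀
    have hopen : IsOpen ((fun x => x - c₀) '' interior L) :=
      isOpen_image_sub isOpen_interior c₀
    exact interior_maximal hsub hopen ⟨p, hp, rfl⟩
  have hMS : interior (closure D) ∩ S = ∅ := by
    rw [Set.eq_empty_iff_forall_notMem]
    rintro x ⟨hxM, hxS⟩
    have hxD : x ∈ interior D := by
      obtain ⟨t, ht, hw⟩ :=
        exists_pos_smul_mem isOpen_interior hxM (x - (p - c₀))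
      have hwD : x + t • (x - (p - c₀)) ∈ closure D := interior_subset hw
      have h1t : (0:ℝ) < 1 + t := by linarith
      have hxeq : x = (t/(1+t)) • (p - c₀) + (1/(1+t)) • (x + t • (x - (p - c₀))) := by
        match_scalars <;> field_simp <;> ring
      rw [hxeq]
      exact hDconv.combo_interior_closure_mem_interior hz₀ hwD
        (by positivity) (by positivity) (by field_simp; try ring)
    obtain ⟨s, hs, hw2⟩ :=
      exists_pos_smul_mem isOpen_interior hxD (x - (p - c₀))
    obtain ⟨l, hl, c, hc, hlc⟩ := Set.mem_sub.1 (interior_subset hw2)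
    have h1s : (0:ℝ) < 1 + s := by linarith
    have hq : (s/(1+s)) • p + (1/(1+s)) • l ∈ interior L :=
      hLconv.combo_interior_closure_mem_interior hp (subset_closure hl)
        (by positivity) (by positivity) (by field_simp; try ring)
    have hc' : (s/(1+s)) • c₀ + (1/(1+s)) • c ∈ C :=
      hCconv hc₀ hc (by positivity) (by positivity) (by field_simp; try ring)
    have hqeq : (s/(1+s)) • p + (1/(1+s)) • l
        = ((s/(1+s)) • c₀ + (1/(1+s)) • c) + x := by
      have hxeq : x = (s/(1+s)) • (p - c₀) + (1/(1+s)) • (l - c) := by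
        rw [hlc]
        match_scalars <;> field_simp <;> ring
      rw [hxeq]
      module
    have hmem : ((s/(1+s)) • c₀ + (1/(1+s)) • c) + x ∈ C + S :=
      Set.add_mem_add hc' hxS
    rw [← hqeq] at hmem
    exact Set.eq_empty_iff_forall_notMem.1 hLS _ ⟨hq, hmem⟩
  have hMfree : IsFreeSet S (closure D) := ⟨isClosed_closure, hDconv.closure, hMS⟩
  have hz₀' : p - c₀ ∈ interior (closure D) := interior_mono subset_closure hz₀
  have hMfd : FullDim (closure D) :=
    (hDconv.closure.interior_nonempty_iff_affineSpan_eq_top).1 ⟨_, hz₀'⟩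
  obtain ⟨Q, hQpoly, hQfree, hQk, hMQ⟩ := hk _ hMfree hMfd
  obtain ⟨m₀, u₀, b₀, hQrep⟩ := hQpoly
  have hQne : {x : Fin d → ℝ | ∀ i, u₀ i x ≤ b₀ i}.Nonempty := by
    rw [← hQrep]
    exact ⟨p - c₀, hMQ (subset_closure (interior_subset hz₀))⟩
  obtain ⟨m, u, b, hrepQ, hnz, hirr⟩ := exists_min_rep m₀ u₀ b₀ hQne
  have hQeq : Q = {x : Fin d → ℝ | ∀ i, u i x ≤ b i} := by rw [hQrep, ← hrepQ]
  have hDQ : D ⊆ Q := (subset_closure).trans hMQ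
  have hintQ : (interior {x : Fin d → ℝ | ∀ i, u i x ≤ b i}).Nonempty := by
    rw [← hQeq]
    exact ⟨p - c₀, interior_mono hDQ hz₀⟩
  have hmk : m ≤ k := min_rep_card_le u b hintQ hnz hirr (hQeq ▸ hQk)
  have hbdd : ∀ i : Fin m, BddBelow ((fun c => u i c) '' C) := by
    intro i
    refine ⟨u i p - b i, ?_⟩
    rintro _ ⟨c, hc, rfl⟩
    have hpc : p - c ∈ Q := hDQ (Set.sub_mem_sub (interior_subset hp) hc)
    rw [hQeq] at hpc
    have h1 := hpc i
    rw [map_sub] at h1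
    linarith
  set γ : Fin m → ℝ := fun i => sInf ((fun c => u i c) '' C) with hγ
  have hLQ' : L ⊆ {x : Fin d → ℝ | ∀ i, u i x ≤ b i + γ i} := by
    intro x hx i
    have hlb : u i x - b i ≤ γ i := by
      refine le_csInf ⟨u i c₀, ⟨c₀, hc₀, rfl⟩⟩ ?_
      rintro r ⟨c, hc, rfl⟩
      have hxc : x - c ∈ Q := hDQ (Set.sub_mem_sub hx hc)
      rw [hQeq] at hxc
      have h1 := hxc i
      rw [map_sub] at h1
      linarith
    linarith
  have hQ'fd : affineSpan ℝ {x : Fin d → ℝ | ∀ i, u i x ≤ b i + γ i} = ⊤ :=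
    eq_top_iff.2 (hLfd ▸ affineSpan_mono ℝ hLQ')
  refine ⟨{x : Fin d → ℝ | ∀ i, u i x ≤ b i + γ i}, ⟨m, u, fun i => b i + γ i, rfl⟩,
    ⟨poly_closed _ _, poly_convex _ _, ?_⟩, ?_, hLQ'⟩
  · rw [Set.eq_empty_iff_forall_notMem]
    rintro x ⟨hxi, hxCS⟩
    obtain ⟨c, hc, s0, hs0, hcs⟩ := Set.mem_add.1 hxCS
    have himg : (fun y => y - c) '' {x : Fin d → ℝ | ∀ i, u i x ≤ b i + γ i}
        ⊆ {x : Fin d → ℝ | ∀ i, u i x ≤ b i} := by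
      rintro _ ⟨y, hy, rfl⟩
      intro i
      have h1 := hy i
      have h2 : γ i ≤ u i c := csInf_le (hbdd i) ⟨c, hc, rfl⟩
      rw [map_sub]
      linarith
    have hxc : x - c ∈ interior Q := by
      rw [hQeq]
      exact interior_maximal ((Set.image_mono interior_subset).trans himg)
        (isOpen_image_sub isOpen_interior c) ⟨x, hxi, rfl⟩
    have hs0x : s0 = x - c := by rw [← hcs]; abel
    exact Set.eq_empty_iff_forall_notMem.1 hQfree.2.2 (x - c) ⟨hxc, hs0x ▸ hs0⟩
  · exact (facets_le_of_rep u (fun i => b i + γ i) hnz hQ'fd).trans (Nat.cast_le.mpr hmk)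
end
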